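/- arXiv:2201.01849 — 5 statements merged into one kernel-verified Lean document; each statement's English description precedes it below -/
import Mathlib

section
/- Let G be a finite simple graph and let M and M* be two matchings in G. Then there exist at least |M*| − |M| pairwise vertex-disjoint augmenting paths for M, all of whose edges belong to the symmetric difference M △ M*. -/
/-- A matching in a simple graph `G`: a finite set of edges of `G`,
no two of which share an endpoint. -/
def IsMatching {V : Type*} (G : SimpleGraph V) (M : Finset (Sym2 V)) : Prop :=
  (∀ e ∈ M, e ∈ G.edgeSet) ∧
    ∀ e ∈ M, ∀ f ∈ M, e ≠ f → ∀ v : V, v ∈ e → v ∉ f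

/-- An augmenting path for the matching `M`: a (nonempty) simple path whose edges
alternate between edges of `M` and edges not in `M`, and whose two endpoints are
not covered by any edge of `M`. -/
def IsAugmentingPath {V : Type*} (G : SimpleGraph V) (M : Finset (Sym2 V))
    {u v : V} (w : G.Walk u v) : Prop :=
  w.IsPath ∧ 0 < w.length ∧
    List.Chain' (fun e f => (e ∈ M ↔ f ∉ M)) w.edges ∧
    (∀ e ∈ M, u ∉ e) ∧ (∀ e ∈ M, v ∉ e)

set_option linter.unusedSectionVars false
namespace AugAux

variable {V : Type*} [DecidableEq V]

open scoped Classical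

/-- the partner of `v` in the edge set `N`, if any. -/
noncomputable def pnext (N : Finset (Sym2 V)) (v : V) : Option V :=
  if h : ∃ w, s(v, w) ∈ N then some h.choose else none

lemma pnext_mem {N : Finset (Sym2 V)} {v w : V} (h : pnext N v = some w) : s(v, w) ∈ N := by
  unfold pnext at h
  split at h
  · rename_i hh; cases h; exact hh.choose_spec
  · simp at h

lemma pnext_none {N : Finset (Sym2 V)} {v : V} (h : pnext N v = none) (w : V) : s(v, w) ∉ N := by
  unfold pnext at h
  split at h
  · simp at h
  · rename_i hh; exact fun hc => hh ⟨w, hc⟩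

/-- `N` has at most one edge through each vertex -/
def Uniq (N : Finset (Sym2 V)) : Prop :=
  ∀ e ∈ N, ∀ f ∈ N, ∀ v : V, v ∈ e → v ∈ f → e = f

lemma pnext_eq_of_mem {N : Finset (Sym2 V)} (hU : Uniq N) {v w : V} (h : s(v, w) ∈ N) :
    pnext N v = some w := by
  unfold pnext
  have hex : ∃ w, s(v, w) ∈ N := ⟨w, h⟩
  rw [dif_pos hex]
  have := hU _ hex.choose_spec _ h v (by simp) (by simp)
  rw [Sym2.eq_iff] at this
  rcases this with ⟨-, h2⟩ | ⟨h1, h2⟩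
  · simp [h2]
  · simp [h2, ← h1]

lemma pnext_symm {N : Finset (Sym2 V)} (hU : Uniq N) {v w : V} (h : pnext N v = some w) :
    pnext N w = some v :=
  pnext_eq_of_mem hU (Sym2.eq_swap ▸ pnext_mem h)

variable (M Mstar : Finset (Sym2 V))

/-- step function of the alternating sequence -/
noncomputable def step (n : ℕ) (v : V) : Option V :=
  if Even n then pnext (Mstar \ M) v else pnext (M \ Mstar) v

noncomputable def seqq (x : V) : ℕ → Option V
  | 0 => some x
  | n + 1 => (seqq x n).bind (step M Mstar n)

lemma step_congr {m n : ℕ} (h : Even m ↔ Even n) : step M Mstar m = step M Mstar n := by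
  funext v
  unfold step
  by_cases hm : Even m
  · rw [if_pos hm, if_pos (h.mp hm)]
  · rw [if_neg hm, if_neg (fun hn => hm (h.mpr hn))]

lemma seqq_succ_of (x : V) (n : ℕ) {v : V} (h : seqq M Mstar x n = some v) :
    seqq M Mstar x (n + 1) = step M Mstar n v := by
  simp [seqq, h]

lemma seqq_none_succ (x : V) (n : ℕ) (h : seqq M Mstar x n = none) :
    seqq M Mstar x (n + 1) = none := by
  simp [seqq, h]

lemma seqq_isSome_of_le (x : V) {m n : ℕ} (h : m ≤ n) {v : V}
    (hn : seqq M Mstar x n = some v) : ∃ u, seqq M Mstar x m = some u := by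
  by_contra hc
  push_neg at hc
  have hm : seqq M Mstar x m = none := by
    cases hh : seqq M Mstar x m with
    | none => rfl
    | some u => exact absurd hh (hc u)
  have : ∀ k, seqq M Mstar x (m + k) = none := by
    intro k
    induction k with
    | zero => exact hm
    | succ k ih => exact seqq_none_succ M Mstar x (m + k) ih
  obtain ⟨k, rfl⟩ := Nat.exists_eq_add_of_le h
  rw [this k] at hn
  exact absurd hn (by simp)

/-- inversion: from a defined value at `n+1` get the previous value and step -/
lemma seqq_succ_inv (x : V) (n : ℕ) {w : V} (h : seqq M Mstar x (n + 1) = some w) :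
    ∃ v, seqq M Mstar x n = some v ∧ step M Mstar n v = some w := by
  obtain ⟨v, hv⟩ := seqq_isSome_of_le M Mstar x (Nat.le_succ n) h
  exact ⟨v, hv, by rw [seqq_succ_of M Mstar x n hv] at h; exact h⟩


section Main

variable {G : SimpleGraph V} {M Mstar : Finset (Sym2 V)}

lemma Uniq.of_matching {N : Finset (Sym2 V)} (h : IsMatching G N) : Uniq N := by
  intro e he f hf v hve hvf
  by_contra hne
  exact h.2 e he f hf hne v hve hvf

lemma Uniq.mono {N N' : Finset (Sym2 V)} (hsub : N' ⊆ N) (h : Uniq N) : Uniq N' :=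
  fun e he f hf v hve hvf => h e (hsub he) f (hsub hf) v hve hvf

variable (hM : IsMatching G M) (hMstar : IsMatching G Mstar)
include hM hMstar

lemma uniq_dm : Uniq (M \ Mstar) := (Uniq.of_matching hM).mono (Finset.sdiff_subset)
lemma uniq_ds : Uniq (Mstar \ M) := (Uniq.of_matching hMstar).mono (Finset.sdiff_subset)

lemma step_symm {n : ℕ} {v w : V} (h : step M Mstar n v = some w) :
    step M Mstar n w = some v := by
  unfold step at *
  by_cases hn : Even n
  · rw [if_pos hn] at *; exact pnext_symm (uniq_ds hM hMstar) h
  · rw [if_neg hn] at *; exact pnext_symm (uniq_dm hM hMstar) h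

lemma step_edge {n : ℕ} {v w : V} (h : step M Mstar n v = some w) :
    s(v, w) ∈ G.edgeSet := by
  unfold step at h
  by_cases hn : Even n
  · rw [if_pos hn] at h
    exact hMstar.1 _ (Finset.sdiff_subset (pnext_mem h))
  · rw [if_neg hn] at h
    exact hM.1 _ (Finset.sdiff_subset (pnext_mem h))

lemma step_ne {n : ℕ} {v w : V} (h : step M Mstar n v = some w) : v ≠ w :=
  (G.mem_edgeSet.mp (step_edge hM hMstar h)).ne

omit hM hMstar in
/-- the set of starting points: uncovered by `M`, covered by `Mstar` -/
def Acal (M Mstar : Finset (Sym2 V)) (x : V) : Prop :=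
  (∀ e ∈ M, x ∉ e) ∧ ∃ e ∈ Mstar, x ∈ e

omit hM hMstar in
lemma Acal.noM {x : V} (hx : Acal M Mstar x) (w : V) : s(x, w) ∉ M :=
  fun hc => hx.1 _ hc (by simp)

lemma Acal.step0 {x : V} (hx : Acal M Mstar x) : ∃ w, step M Mstar 0 x = some w := by
  obtain ⟨e, he, hxe⟩ := hx.2
  obtain ⟨y, rfl⟩ := Sym2.mem_iff_exists.mp hxe
  have : s(x, y) ∈ Mstar \ M := Finset.mem_sdiff.mpr ⟨he, hx.noM y⟩
  exact ⟨y, by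
    unfold step
    rw [if_pos (Even.zero)]
    exact pnext_eq_of_mem (uniq_ds hM hMstar) this⟩

/-- the alternating sequence starting at a vertex of `Acal` never repeats -/
lemma seqq_inj {x : V} (hx : Acal M Mstar x) :
    ∀ j i, i < j → ∀ v, seqq M Mstar x i = some v → seqq M Mstar x j = some v → False := by
  intro j
  induction j using Nat.strong_induction_on with
  | _ j ih =>
    intro i hij v hi hj
    cases j with
    | zero => omega
    | succ j' =>
      obtain ⟨u', hu', hstep'⟩ := seqq_succ_inv M Mstar x j' hj
      by_cases hp : (Even i ↔ Even (j' + 1))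
      · -- same parity
        cases i with
        | zero =>
          -- v = x, incoming edge is an M-edge: contradiction
          have hvx : v = x := by simpa [seqq] using hi.symm
          subst hvx
          have hj'odd : ¬ Even j' := by
            have : Even (j' + 1) := hp.mp (by simp)
            simpa [Nat.even_add_one] using this
          have hsym := step_symm hM hMstar hstep'
          unfold step at hsym
          rw [if_neg hj'odd] at hsym
          exact (hx.noM u') (Finset.mem_sdiff.mp (pnext_mem hsym)).1
        | succ i' =>
          obtain ⟨u, hu, hstep⟩ := seqq_succ_inv M Mstar x i' hi
          have hpe : Even i' ↔ Even j' := by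
            rw [Nat.even_add_one, Nat.even_add_one] at hp
            tauto
          have hsame : step M Mstar i' = step M Mstar j' := step_congr M Mstar hpe
          have h1 : step M Mstar i' v = some u := step_symm hM hMstar hstep
          have h2 : step M Mstar j' v = some u' := step_symm hM hMstar hstep'
          rw [hsame, h2] at h1
          cases h1
          exact ih j' (by omega) i' (by omega) u' hu hu'
      · -- different parity
        by_cases hj1 : j' + 1 = i + 1
        · -- adjacent: loop edge, impossible
          have : j' = i := by omega
          subst this
          rw [hu'] at hi
          cases hi
          exact step_ne hM hMstar hstep' rfl
        · -- distance at least 3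
          have h3 : i + 1 < j' := by
            have hp' : ¬ (i % 2 = 0 ↔ (j' + 1) % 2 = 0) := by
              simpa [Nat.even_iff] using hp
            omega
          obtain ⟨w, hw⟩ := seqq_isSome_of_le M Mstar x (show i + 1 ≤ j' + 1 by omega) hj
          have hstepw : step M Mstar i v = some w := by
            rw [seqq_succ_of M Mstar x i hi] at hw; exact hw
          have hpe : Even i ↔ Even j' := by
            rw [Nat.even_add_one] at hp
            tauto
          have h2 : step M Mstar j' v = some u' := step_symm hM hMstar hstep'
          rw [← step_congr M Mstar hpe, hstepw] at h2
          cases h2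
          exact ih j' (by omega) (i + 1) h3 u' hw hu'

section Fin
variable [Fintype V]

lemma exists_death {x : V} (hx : Acal M Mstar x) :
    ∃ n, seqq M Mstar x (n + 1) = none := by
  by_contra hc
  push_neg at hc
  have hall : ∀ n, ∃ v, seqq M Mstar x n = some v := by
    intro n
    cases n with
    | zero => exact ⟨x, rfl⟩
    | succ n => exact Option.ne_none_iff_exists'.mp (hc n)
  set f : ℕ → V := fun n => (hall n).choose with hf
  obtain ⟨a, b, hab, hfab⟩ := Finite.exists_ne_map_eq_of_infinite f
  have ha : seqq M Mstar x a = some (f a) := (hall a).choose_spec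
  have hb : seqq M Mstar x b = some (f b) := (hall b).choose_spec
  rcases hab.lt_or_gt with h | h
  · exact seqq_inj hM hMstar hx b a h (f a) ha (hfab ▸ hb)
  · exact seqq_inj hM hMstar hx a b h (f b) hb (hfab ▸ ha)

omit hM hMstar in
open scoped Classical in
/-- length of the maximal alternating sequence from `x` -/
noncomputable def plen (M Mstar : Finset (Sym2 V)) (x : V) : ℕ :=
  if h : ∃ n, seqq M Mstar x (n + 1) = none then Nat.find h else 0

lemma plen_death {x : V} (hx : Acal M Mstar x) :
    seqq M Mstar x (plen M Mstar x + 1) = none := by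
  unfold plen
  rw [dif_pos (exists_death hM hMstar hx)]
  exact Nat.find_spec (exists_death hM hMstar hx)

lemma plen_eq {x : V} (hx : Acal M Mstar x) {n : ℕ} {v : V}
    (hn : seqq M Mstar x n = some v) (hn1 : seqq M Mstar x (n + 1) = none) :
    plen M Mstar x = n := by
  classical
  unfold plen
  rw [dif_pos (exists_death hM hMstar hx)]
  rw [Nat.find_eq_iff]
  refine ⟨hn1, fun k hk hknone => ?_⟩
  obtain ⟨u, hu⟩ := seqq_isSome_of_le M Mstar x (show k + 1 ≤ n by omega) hn
  rw [hu] at hknone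
  exact absurd hknone (by simp)

lemma plen_some {x : V} (hx : Acal M Mstar x) :
    ∃ v, seqq M Mstar x (plen M Mstar x) = some v := by
  classical
  cases hplen : plen M Mstar x with
  | zero => exact ⟨x, rfl⟩
  | succ k =>
    unfold plen at hplen
    rw [dif_pos (exists_death hM hMstar hx)] at hplen
    have := Nat.find_min (exists_death hM hMstar hx) (show k < Nat.find _ by omega)
    exact Option.ne_none_iff_exists'.mp this

omit hM hMstar in
/-- the endpoint of the maximal alternating sequence from `x` -/
noncomputable def endp (M Mstar : Finset (Sym2 V)) (x : V) : V :=
  (seqq M Mstar x (plen M Mstar x)).getD x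

lemma endp_spec {x : V} (hx : Acal M Mstar x) :
    seqq M Mstar x (plen M Mstar x) = some (endp M Mstar x) := by
  obtain ⟨v, hv⟩ := plen_some hM hMstar hx
  rw [endp, hv]
  rfl

lemma plen_pos {x : V} (hx : Acal M Mstar x) : 0 < plen M Mstar x := by
  obtain ⟨w, hw⟩ := hx.step0 hM hMstar
  have h1 : seqq M Mstar x 1 = some w := by
    rw [seqq_succ_of M Mstar x 0 rfl]; exact hw
  rcases Nat.eq_zero_or_pos (plen M Mstar x) with h | h
  · exfalso
    have := plen_death hM hMstar hx
    rw [h] at this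
    rw [this] at h1
    exact absurd h1 (by simp)
  · exact h

/-- The incoming edge of a position `n+1` of the sequence. -/
lemma seqq_incoming {x : V} {n : ℕ} {v : V}
    (h : seqq M Mstar x (n + 1) = some v) :
    ∃ u, seqq M Mstar x n = some u ∧ step M Mstar n u = some v ∧
      s(u, v) ∈ (if Even n then Mstar \ M else M \ Mstar) := by
  obtain ⟨u, hu, hstep⟩ := seqq_succ_inv M Mstar x n h
  refine ⟨u, hu, hstep, ?_⟩
  unfold step at hstep
  by_cases hn : Even n
  · rw [if_pos hn] at *; exact pnext_mem hstep
  · rw [if_neg hn] at *; exact pnext_mem hstep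

/-- no outgoing edge at the endpoint -/
lemma endp_no_out {x : V} (hx : Acal M Mstar x) (w : V) :
    s(endp M Mstar x, w) ∉ (if Even (plen M Mstar x) then Mstar \ M else M \ Mstar) := by
  have hd := plen_death hM hMstar hx
  rw [seqq_succ_of M Mstar x _ (endp_spec hM hMstar hx)] at hd
  unfold step at hd
  by_cases hn : Even (plen M Mstar x)
  · rw [if_pos hn] at *; exact pnext_none hd w
  · rw [if_neg hn] at *; exact pnext_none hd w

/-- If `plen x` is odd then the endpoint is also in `Acal`. -/
lemma endp_mem_Acal {x : V} (hx : Acal M Mstar x) (hodd : ¬ Even (plen M Mstar x)) :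
    Acal M Mstar (endp M Mstar x) := by
  set L := plen M Mstar x with hL
  set y := endp M Mstar x with hy
  have hLpos : 0 < L := plen_pos hM hMstar hx
  obtain ⟨L', hL'⟩ : ∃ L', L = L' + 1 := ⟨L - 1, by omega⟩
  have hyL : seqq M Mstar x L = some y := endp_spec hM hMstar hx
  rw [hL'] at hyL
  obtain ⟨u, hu, hstep, hedge⟩ := seqq_incoming hM hMstar hyL
  have hL'even : Even L' := by
    rw [hL'] at hodd
    rw [Nat.even_add_one] at hodd
    tauto
  rw [if_pos hL'even] at hedge
  have hedge' : s(u, y) ∈ Mstar := (Finset.mem_sdiff.mp hedge).1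
  constructor
  · -- y not covered by M
    intro e he hye
    obtain ⟨w, rfl⟩ := Sym2.mem_iff_exists.mp hye
    by_cases heM : s(y, w) ∈ Mstar
    · -- then this Mstar edge equals s(u,y), so s(u,y) ∈ M, contradiction
      have := (Uniq.of_matching hMstar) _ heM _ hedge' y (by simp) (by simp)
      rw [this] at he
      exact (Finset.mem_sdiff.mp hedge).2 he
    · have : s(y, w) ∈ M \ Mstar := Finset.mem_sdiff.mpr ⟨he, heM⟩
      have hno := endp_no_out hM hMstar hx w
      rw [if_neg hodd] at hno
      exact hno this
  · exact ⟨s(u, y), hedge', by simp⟩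

/-- If `plen x` is even then the endpoint is covered by `M` and not by `Mstar`. -/
lemma endp_bad {x : V} (hx : Acal M Mstar x) (heven : Even (plen M Mstar x)) :
    (∃ e ∈ M, endp M Mstar x ∈ e) ∧ ∀ e ∈ Mstar, endp M Mstar x ∉ e := by
  set L := plen M Mstar x with hL
  set y := endp M Mstar x with hy
  have hLpos : 0 < L := plen_pos hM hMstar hx
  obtain ⟨L', hL'⟩ : ∃ L', L = L' + 1 := ⟨L - 1, by omega⟩
  have hyL : seqq M Mstar x L = some y := endp_spec hM hMstar hx
  rw [hL'] at hyL
  obtain ⟨u, hu, hstep, hedge⟩ := seqq_incoming hM hMstar hyL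
  have hL'odd : ¬ Even L' := by
    rw [hL'] at heven
    rw [Nat.even_add_one] at heven
    tauto
  rw [if_neg hL'odd] at hedge
  have hedge' : s(u, y) ∈ M := (Finset.mem_sdiff.mp hedge).1
  constructor
  · exact ⟨s(u, y), hedge', by simp⟩
  · intro e he hye
    obtain ⟨w, rfl⟩ := Sym2.mem_iff_exists.mp hye
    by_cases heM : s(y, w) ∈ M
    · have := (Uniq.of_matching hM) _ heM _ hedge' y (by simp) (by simp)
      rw [this] at he
      exact (Finset.mem_sdiff.mp hedge).2 he
    · have : s(y, w) ∈ Mstar \ M := Finset.mem_sdiff.mpr ⟨he, heM⟩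
      have hno := endp_no_out hM hMstar hx w
      rw [if_pos heven] at hno
      exact hno this


omit hM hMstar in
lemma pnext_eq_none_of {N : Finset (Sym2 V)} {v : V} (h : ∀ w, s(v, w) ∉ N) :
    pnext N v = none := by
  unfold pnext
  rw [dif_neg]
  push_neg
  exact h

omit hM hMstar in
lemma step_none_noM {x : V} (hx : Acal M Mstar x) {n : ℕ} (hn : ¬ Even n) :
    step M Mstar n x = none := by
  unfold step
  rw [if_neg hn]
  exact pnext_eq_none_of (fun w hc => hx.noM w (Finset.mem_sdiff.mp hc).1)

/-- reversal: the sequence from the endpoint runs the path backwards. -/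
lemma seqq_rev {x : V} (hx : Acal M Mstar x) (hodd : ¬ Even (plen M Mstar x)) :
    ∀ t ≤ plen M Mstar x,
      seqq M Mstar (endp M Mstar x) t = seqq M Mstar x (plen M Mstar x - t) := by
  set L := plen M Mstar x with hL
  set y := endp M Mstar x with hy
  intro t
  induction t with
  | zero =>
    intro _
    simp only [Nat.sub_zero]
    rw [show seqq M Mstar y 0 = some y from rfl, endp_spec hM hMstar hx]
  | succ t ih =>
    intro ht
    have iht := ih (by omega)
    obtain ⟨k, hk⟩ : ∃ k, L - t = k + 1 := ⟨L - t - 1, by omega⟩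
    have hv : ∃ v, seqq M Mstar x (L - t) = some v := by
      obtain ⟨v, hv⟩ := seqq_isSome_of_le M Mstar x (show L - t ≤ L by omega)
        (endp_spec hM hMstar hx)
      exact ⟨v, hv⟩
    obtain ⟨v, hv⟩ := hv
    rw [hk] at hv
    obtain ⟨u, hu, hstep, -⟩ := seqq_incoming hM hMstar hv
    have hyt : seqq M Mstar y t = some v := by rw [iht, hk]; exact hv
    have hpar : Even t ↔ Even k := by
      have h1 : L = k + 1 + t := by omega
      have h2 : ¬ (L % 2 = 0) := by simpa [Nat.even_iff] using hodd
      simp only [Nat.even_iff]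
      omega
    have hstv : step M Mstar t v = some u := by
      rw [step_congr M Mstar hpar]
      exact step_symm hM hMstar hstep
    rw [seqq_succ_of M Mstar y t hyt, hstv, show L - (t + 1) = k by omega, hu]

lemma plen_endp {x : V} (hx : Acal M Mstar x) (hodd : ¬ Even (plen M Mstar x)) :
    plen M Mstar (endp M Mstar x) = plen M Mstar x ∧
      endp M Mstar (endp M Mstar x) = x := by
  set L := plen M Mstar x with hL
  set y := endp M Mstar x with hy
  have hyA : Acal M Mstar y := endp_mem_Acal hM hMstar hx hodd
  have hyL : seqq M Mstar y L = some x := by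
    rw [seqq_rev hM hMstar hx hodd L le_rfl]
    rw [Nat.sub_self]; rfl
  have hyL1 : seqq M Mstar y (L + 1) = none := by
    rw [seqq_succ_of M Mstar y L hyL]
    exact step_none_noM (M := M) (Mstar := Mstar) hx hodd
  have hplen : plen M Mstar y = L := plen_eq hM hMstar hyA hyL hyL1
  refine ⟨hplen, ?_⟩
  have := endp_spec hM hMstar hyA
  rw [hplen, hyL] at this
  exact (Option.some_inj.mp this).symm

/-- two sequences that meet must be the same path or reverses of each other. -/
lemma two_path {x x' : V} (hx : Acal M Mstar x) (hx' : Acal M Mstar x') :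
    ∀ i j (v : V), seqq M Mstar x i = some v → seqq M Mstar x' j = some v →
      x = x' ∨ x = endp M Mstar x' ∨ x' = endp M Mstar x := by
  intro i
  induction i using Nat.strong_induction_on with
  | _ i ih =>
    intro j v hi hj
    cases i with
    | zero =>
      have hvx : v = x := by simpa [seqq] using hi.symm
      subst hvx
      cases j with
      | zero =>
        left
        simpa [seqq] using hj.symm
      | succ j' =>
        obtain ⟨u', hu', hstep'⟩ := seqq_succ_inv M Mstar x' j' hj
        by_cases hj'e : Even j'
        · -- endpoint of x' path
          right; left
          have hnext : seqq M Mstar x' (j' + 2) = none := by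
            rw [seqq_succ_of M Mstar x' (j' + 1) hj]
            exact step_none_noM (M := M) (Mstar := Mstar) hx
              (by simp [Nat.even_add_one, hj'e])
          have hpl : plen M Mstar x' = j' + 1 := plen_eq hM hMstar hx' hj hnext
          have := endp_spec hM hMstar hx'
          rw [hpl, hj] at this
          exact Option.some_inj.mp this
        · -- incoming M-edge at x, contradiction
          exfalso
          have hsym := step_symm hM hMstar hstep'
          unfold step at hsym
          rw [if_neg hj'e] at hsym
          exact (hx.noM u') (Finset.mem_sdiff.mp (pnext_mem hsym)).1
    | succ i' =>
      obtain ⟨u, hu, hstep⟩ := seqq_succ_inv M Mstar x i' hi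
      have hsymi : step M Mstar i' v = some u := step_symm hM hMstar hstep
      cases j with
      | zero =>
        have hvx' : v = x' := by simpa [seqq] using hj.symm
        by_cases hi'e : Even i'
        · -- recurse with (i', 1)
          have hst : step M Mstar 0 x' = some u := by
            rw [step_congr M Mstar (show Even (0 : ℕ) ↔ Even i' by simpa using hi'e),
              ← hvx']
            exact hsymi
          have h1 : seqq M Mstar x' 1 = some u := by
            rw [show (1 : ℕ) = 0 + 1 from rfl, seqq_succ_of M Mstar x' 0 rfl]
            exact hst
          exact ih i' (by omega) 1 u hu h1
        · exfalso
          unfold step at hsymi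
          rw [if_neg hi'e, hvx'] at hsymi
          exact (hx'.noM u) (Finset.mem_sdiff.mp (pnext_mem hsymi)).1
      | succ j' =>
        obtain ⟨u', hu', hstep'⟩ := seqq_succ_inv M Mstar x' j' hj
        have hsymj : step M Mstar j' v = some u' := step_symm hM hMstar hstep'
        by_cases hpar : Even i' ↔ Even j'
        · rw [step_congr M Mstar hpar, hsymj] at hsymi
          have huu : u' = u := Option.some_inj.mp hsymi
          subst huu
          exact ih i' (by omega) j' u' hu hu'
        · have hpar2 : Even i' ↔ Even (j' + 1) := by
            rw [Nat.even_add_one]; tauto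
          have hnext : seqq M Mstar x' (j' + 2) = some u := by
            rw [seqq_succ_of M Mstar x' (j' + 1) hj, ← step_congr M Mstar hpar2]
            exact hsymi
          exact ih i' (by omega) (j' + 2) u hu hnext


omit hM hMstar in
/-- total version of the sequence -/
noncomputable def seqv (M Mstar : Finset (Sym2 V)) (x : V) (n : ℕ) : V :=
  (seqq M Mstar x n).getD x

lemma seqv_spec {x : V} (hx : Acal M Mstar x) {n : ℕ} (hn : n ≤ plen M Mstar x) :
    seqq M Mstar x n = some (seqv M Mstar x n) := by
  obtain ⟨v, hv⟩ := seqq_isSome_of_le M Mstar x hn (endp_spec hM hMstar hx)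
  rw [seqv, hv]
  rfl

lemma edge_mem {x : V} (hx : Acal M Mstar x) {t : ℕ} (ht : t < plen M Mstar x) :
    s(seqv M Mstar x t, seqv M Mstar x (t + 1)) ∈
      (if Even t then Mstar \ M else M \ Mstar) := by
  have h1 : seqq M Mstar x (t + 1) = some (seqv M Mstar x (t + 1)) :=
    seqv_spec hM hMstar hx (by omega)
  obtain ⟨u, hu, hstep, hedge⟩ := seqq_incoming hM hMstar h1
  have : u = seqv M Mstar x t := by
    rw [seqv_spec hM hMstar hx (show t ≤ plen M Mstar x by omega)] at hu
    exact Option.some_inj.mp hu.symm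
  rw [← this]
  exact hedge

lemma step_seqv {x : V} (hx : Acal M Mstar x) {t : ℕ} (ht : t < plen M Mstar x) :
    step M Mstar t (seqv M Mstar x t) = some (seqv M Mstar x (t + 1)) := by
  have h1 : seqq M Mstar x (t + 1) = some (seqv M Mstar x (t + 1)) :=
    seqv_spec hM hMstar hx (by omega)
  rw [seqq_succ_of M Mstar x t (seqv_spec hM hMstar hx (by omega : t ≤ plen M Mstar x))] at h1
  exact h1

/-- construction of the walk along the sequence, with `k` steps remaining -/
noncomputable def walkAux {x : V} (hx : Acal M Mstar x) :
    (k : ℕ) → k ≤ plen M Mstar x → (v : V) →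
      seqq M Mstar x (plen M Mstar x - k) = some v → G.Walk v (endp M Mstar x)
  | 0, _, v, h =>
    SimpleGraph.Walk.nil.copy
      (by
        have he := endp_spec hM hMstar hx
        rw [Nat.sub_zero] at h
        rw [he] at h
        exact Option.some_inj.mp h) rfl
  | (k + 1), hk, v, h =>
    SimpleGraph.Walk.cons
      (by
        have hst : step M Mstar (plen M Mstar x - (k + 1)) v
            = some (seqv M Mstar x (plen M Mstar x - k)) := by
          have hv : v = seqv M Mstar x (plen M Mstar x - (k + 1)) := by
            rw [seqv_spec hM hMstar hx (show plen M Mstar x - (k+1) ≤ plen M Mstar x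
              by omega)] at h
            exact (Option.some_inj.mp h).symm
          rw [hv]
          have := step_seqv hM hMstar hx
            (show plen M Mstar x - (k + 1) < plen M Mstar x by omega)
          rwa [show plen M Mstar x - (k + 1) + 1 = plen M Mstar x - k by omega] at this
        exact G.mem_edgeSet.mp (step_edge hM hMstar hst))
      (walkAux hx k (by omega) (seqv M Mstar x (plen M Mstar x - k))
        (seqv_spec hM hMstar hx (by omega)))

lemma walkAux_support {x : V} (hx : Acal M Mstar x) :
    ∀ (k : ℕ) (hk : k ≤ plen M Mstar x) (v : V)
      (h : seqq M Mstar x (plen M Mstar x - k) = some v),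
      (walkAux hM hMstar hx k hk v h).support
        = (List.range' (plen M Mstar x - k) (k + 1)).map (seqv M Mstar x) := by
  intro k
  induction k with
  | zero =>
    intro hk v h
    rw [walkAux]
    simp only [SimpleGraph.Walk.support_copy, SimpleGraph.Walk.support_nil,
      List.range'_succ, Nat.sub_zero]
    have h2 : seqv M Mstar x (plen M Mstar x) = endp M Mstar x := by
      rw [seqv, endp_spec hM hMstar hx]
      rfl
    simp [h2]
  | succ k ih =>
    intro hk v h
    rw [walkAux]
    rw [SimpleGraph.Walk.support_cons, ih]
    conv_rhs => rw [List.range'_succ, List.map_cons]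
    have h1 : plen M Mstar x - (k + 1) + 1 = plen M Mstar x - k := by omega
    have h2 : seqv M Mstar x (plen M Mstar x - (k + 1)) = v := by
      rw [seqv, h]; rfl
    rw [h1, h2]

lemma walkAux_edges {x : V} (hx : Acal M Mstar x) :
    ∀ (k : ℕ) (hk : k ≤ plen M Mstar x) (v : V)
      (h : seqq M Mstar x (plen M Mstar x - k) = some v),
      (walkAux hM hMstar hx k hk v h).edges
        = (List.range' (plen M Mstar x - k) k).map
            (fun t => s(seqv M Mstar x t, seqv M Mstar x (t + 1))) := by
  intro k
  induction k with
  | zero =>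
    intro hk v h
    rw [walkAux]
    simp
  | succ k ih =>
    intro hk v h
    rw [walkAux]
    rw [SimpleGraph.Walk.edges_cons, ih]
    conv_rhs => rw [List.range'_succ, List.map_cons]
    have h1 : plen M Mstar x - (k + 1) + 1 = plen M Mstar x - k := by omega
    have h2 : seqv M Mstar x (plen M Mstar x - (k + 1)) = v := by
      rw [seqv, h]; rfl
    rw [h1, h2]


/-- the full augmenting walk from `x` -/
noncomputable def bigWalk {x : V} (hx : Acal M Mstar x) : G.Walk x (endp M Mstar x) :=
  walkAux hM hMstar hx (plen M Mstar x) le_rfl x (by rw [Nat.sub_self]; rfl)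

lemma bigWalk_support {x : V} (hx : Acal M Mstar x) :
    (bigWalk hM hMstar hx).support
      = (List.range' 0 (plen M Mstar x + 1)).map (seqv M Mstar x) := by
  rw [bigWalk, walkAux_support, Nat.sub_self]

lemma bigWalk_mem_support {x : V} (hx : Acal M Mstar x) {y : V} :
    y ∈ (bigWalk hM hMstar hx).support ↔
      ∃ t ≤ plen M Mstar x, seqv M Mstar x t = y := by
  rw [bigWalk_support hM hMstar hx, List.mem_map]
  constructor
  · rintro ⟨a, ha, rfl⟩
    obtain ⟨i, hi, rfl⟩ := List.mem_range'.mp ha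
    exact ⟨0 + 1 * i, by omega, rfl⟩
  · rintro ⟨t, ht, rfl⟩
    exact ⟨t, List.mem_range'.mpr ⟨t, by omega, by omega⟩, rfl⟩

lemma bigWalk_edges {x : V} (hx : Acal M Mstar x) :
    (bigWalk hM hMstar hx).edges
      = (List.range' 0 (plen M Mstar x)).map
          (fun t => s(seqv M Mstar x t, seqv M Mstar x (t + 1))) := by
  rw [bigWalk, walkAux_edges, Nat.sub_self]

lemma bigWalk_edges_symmDiff {x : V} (hx : Acal M Mstar x) :
    ∀ e ∈ (bigWalk hM hMstar hx).edges, e ∈ symmDiff M Mstar := by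
  intro e he
  rw [bigWalk_edges hM hMstar hx, List.mem_map] at he
  obtain ⟨t, ht, rfl⟩ := he
  obtain ⟨i, hi, rfl⟩ := List.mem_range'.mp ht
  have := edge_mem hM hMstar hx (show 0 + 1 * i < plen M Mstar x by omega)
  rw [Finset.mem_symmDiff]
  by_cases he : Even (0 + 1 * i)
  · rw [if_pos he] at this
    right
    exact ⟨(Finset.mem_sdiff.mp this).1, (Finset.mem_sdiff.mp this).2⟩
  · rw [if_neg he] at this
    left
    exact ⟨(Finset.mem_sdiff.mp this).1, (Finset.mem_sdiff.mp this).2⟩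

lemma bigWalk_isAugmenting {x : V} (hx : Acal M Mstar x)
    (hodd : ¬ Even (plen M Mstar x)) :
    IsAugmentingPath G M (bigWalk hM hMstar hx) := by
  have hLpos : 0 < plen M Mstar x := plen_pos hM hMstar hx
  refine ⟨?_, ?_, ?_, hx.1, (endp_mem_Acal hM hMstar hx hodd).1⟩
  · -- path
    apply SimpleGraph.Walk.IsPath.mk'
    rw [bigWalk_support hM hMstar hx]
    apply List.Nodup.map_on _ (List.nodup_range' (s := 0) (n := plen M Mstar x + 1))
    intro a ha b hb hab
    obtain ⟨i, hi, rfl⟩ := List.mem_range'.mp ha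
    obtain ⟨j, hj, rfl⟩ := List.mem_range'.mp hb
    by_contra hne
    have hia : seqq M Mstar x (0 + 1 * i) = some (seqv M Mstar x (0 + 1 * i)) :=
      seqv_spec hM hMstar hx (by omega)
    have hjb : seqq M Mstar x (0 + 1 * j) = some (seqv M Mstar x (0 + 1 * j)) :=
      seqv_spec hM hMstar hx (by omega)
    rw [hab] at hia
    rcases Nat.lt_or_ge (0 + 1 * i) (0 + 1 * j) with h | h
    · exact seqq_inj hM hMstar hx _ _ h _ hia hjb
    · have h' : 0 + 1 * j < 0 + 1 * i := by omega
      exact seqq_inj hM hMstar hx _ _ h' _ hjb hia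
  · -- positive length
    have := (bigWalk hM hMstar hx).length_edges
    rw [bigWalk_edges hM hMstar hx] at this
    simp only [List.length_map, List.length_range'] at this
    omega
  · -- alternation
    rw [bigWalk_edges hM hMstar hx, show List.range' 0 (plen M Mstar x)
      = List.range (plen M Mstar x) by rw [List.range_eq_range'], List.Chain', List.isChain_map]
    obtain ⟨L', hL'⟩ : ∃ L', plen M Mstar x = L' + 1 := ⟨plen M Mstar x - 1, by omega⟩
    rw [hL', show L' + 1 = Nat.succ L' from rfl, List.isChain_range_succ]
    intro m hm
    simp only [Nat.succ_eq_add_one]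
    have h1 := edge_mem hM hMstar hx (show m < plen M Mstar x by omega)
    have h2 := edge_mem hM hMstar hx (show m + 1 < plen M Mstar x by omega)
    
    by_cases hme : Even m
    · rw [if_pos hme] at h1
      rw [if_neg (by simp [Nat.even_add_one, hme])] at h2
      exact iff_of_false (Finset.mem_sdiff.mp h1).2
        (not_not_intro (Finset.mem_sdiff.mp h2).1)
    · rw [if_neg hme] at h1
      rw [if_pos (by simp [Nat.even_add_one, hme])] at h2
      exact iff_of_true (Finset.mem_sdiff.mp h1).1 (Finset.mem_sdiff.mp h2).2
  
lemma disjoint_supports {x x' : V} (hx : Acal M Mstar x) (hx' : Acal M Mstar x')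
    (h1 : x ≠ x') (h2 : x ≠ endp M Mstar x') (h3 : x' ≠ endp M Mstar x) :
    ∀ y, y ∈ (bigWalk hM hMstar hx).support → y ∉ (bigWalk hM hMstar hx').support := by
  intro y hy hy'
  obtain ⟨t, ht, rfl⟩ := (bigWalk_mem_support hM hMstar hx).mp hy
  obtain ⟨t', ht', hteq⟩ := (bigWalk_mem_support hM hMstar hx').mp hy'
  have hs1 : seqq M Mstar x t = some (seqv M Mstar x t) := seqv_spec hM hMstar hx ht
  have hs2 : seqq M Mstar x' t' = some (seqv M Mstar x t) := by
    rw [← hteq] at hs1 ⊢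
    exact seqv_spec hM hMstar hx' ht'
  rcases two_path hM hMstar hx hx' t t' _ hs1 hs2 with h | h | h
  · exact h1 h
  · exact h2 h
  · exact h3 h

end Fin
end Main

section Cover
variable [Fintype V] {G : SimpleGraph V} {N : Finset (Sym2 V)}

/-- set of covered vertices -/
noncomputable def coverF (N : Finset (Sym2 V)) : Finset V :=
  Finset.univ.filter (fun v => ∃ e ∈ N, v ∈ e)

lemma coverF_card (h : IsMatching G N) : (coverF N).card = 2 * N.card := by
  classical
  have hrw : coverF N = N.biUnion (fun e => Finset.univ.filter (· ∈ e)) := by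
    ext v
    simp [coverF, Finset.mem_biUnion]
  rw [hrw, Finset.card_biUnion]
  · have hone : ∀ e ∈ N, (Finset.univ.filter (· ∈ e)).card = 2 := by
      intro e he
      induction e with
      | _ a b =>
        have hab : a ≠ b := (G.mem_edgeSet.mp (h.1 _ he)).ne
        have : Finset.univ.filter (· ∈ s(a, b)) = {a, b} := by
          ext v
          simp [Sym2.mem_iff]
        rw [this, Finset.card_pair hab]
    rw [Finset.sum_congr rfl hone, Finset.sum_const, smul_eq_mul, mul_comm]
  · intro e he f hf hef
    rw [Function.onFun, Finset.disjoint_left]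
    intro v hv hv'
    rw [Finset.mem_filter] at hv hv'
    exact absurd hv'.2 (h.2 e he f hf hef v hv.2)

end Cover

/-- selecting one element from each orbit of a fixed-point-free involution -/
lemma pair_select {α : Type*} [DecidableEq α] (φ : α → α) :
    ∀ S : Finset α, (∀ a ∈ S, φ a ∈ S) → (∀ a ∈ S, φ (φ a) = a) →
      (∀ a ∈ S, φ a ≠ a) →
      ∃ R : Finset α, R ⊆ S ∧ (∀ a ∈ R, φ a ∉ R) ∧ S.card = 2 * R.card := by
  intro S
  induction S using Finset.strongInduction with
  | _ S ih =>
    intro hcl hinv hne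
    rcases S.eq_empty_or_nonempty with rfl | ⟨a, ha⟩
    · exact ⟨∅, by simp⟩
    · have hfa : φ a ∈ S := hcl a ha
      have hfa_ne : φ a ≠ a := hne a ha
      have hsub : S \ {a, φ a} ⊆ S := Finset.sdiff_subset
      have hss : S \ {a, φ a} ⊂ S := by
        refine Finset.ssubset_iff_of_subset hsub |>.mpr ⟨a, ha, ?_⟩
        simp
      have hcl' : ∀ b ∈ S \ {a, φ a}, φ b ∈ S \ {a, φ a} := by
        intro b hb
        rw [Finset.mem_sdiff, Finset.mem_insert, Finset.mem_singleton] at hb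
        push_neg at hb
        obtain ⟨hbS, hba, hbfa⟩ := hb
        rw [Finset.mem_sdiff, Finset.mem_insert, Finset.mem_singleton]
        push_neg
        refine ⟨hcl b hbS, ?_, ?_⟩
        · intro hc
          exact hbfa (by rw [← hinv b hbS, hc])
        · intro hc
          apply hba
          have := congrArg φ hc
          rwa [hinv b hbS, hinv a ha] at this
      obtain ⟨R', hR'sub, hR'dis, hR'card⟩ := ih _ hss hcl'
        (fun b hb => hinv b (hsub hb))
        (fun b hb => hne b (hsub hb))
      have hmem_of_R' : ∀ b ∈ R', b ∈ S ∧ b ≠ a ∧ b ≠ φ a := by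
        intro b hb
        have := hR'sub hb
        rw [Finset.mem_sdiff, Finset.mem_insert, Finset.mem_singleton] at this
        push_neg at this
        exact ⟨this.1, this.2.1, this.2.2⟩
      have haR' : a ∉ R' := fun hc => (hmem_of_R' a hc).2.1 rfl
      refine ⟨insert a R', ?_, ?_, ?_⟩
      · intro b hb
        rcases Finset.mem_insert.mp hb with rfl | hb
        · exact ha
        · exact hsub (hR'sub hb)
      · intro b hb hc
        rcases Finset.mem_insert.mp hb with rfl | hb
        · rcases Finset.mem_insert.mp hc with hc | hc
          · exact hfa_ne hc
          · exact (hmem_of_R' _ hc).2.2 rfl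
        · rcases Finset.mem_insert.mp hc with hc | hc
          · -- φ b = a, so b = φ a, contradiction
            exact (hmem_of_R' b hb).2.2
              (by rw [← hinv b (hsub (hR'sub hb)), hc])
          · exact hR'dis b hb hc
      · have hpair_sub : ({a, φ a} : Finset α) ⊆ S := by
          intro b hb
          rcases Finset.mem_insert.mp hb with rfl | hb
          · exact ha
          · rw [Finset.mem_singleton] at hb
            rw [hb]
            exact hfa
        have hpair_card : ({a, φ a} : Finset α).card = 2 :=
          Finset.card_pair (Ne.symm hfa_ne)
        have h1 : (S \ {a, φ a}).card = S.card - 2 := by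
          rw [Finset.card_sdiff_of_subset hpair_sub, hpair_card]
        have h2 : 2 ≤ S.card := hpair_card ▸ Finset.card_le_card hpair_sub
        rw [Finset.card_insert_of_notMem haR']
        omega

end AugAux


open AugAux

/-- For matchings `M` and `M*` in a finite simple graph, there exist at least
`|M*| - |M|` pairwise vertex-disjoint augmenting paths for `M`, all of whose
edges lie in the symmetric difference `M △ M*`. -/
theorem augmenting_paths_in_symmDiff {V : Type*} [Fintype V] [DecidableEq V]
    (G : SimpleGraph V) (M Mstar : Finset (Sym2 V))
    (hM : IsMatching G M) (hMstar : IsMatching G Mstar) :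
    ∃ P : List (Σ u : V, Σ v : V, G.Walk u v),
      (∀ p ∈ P, IsAugmentingPath G M p.2.2 ∧ ∀ e ∈ p.2.2.edges, e ∈ symmDiff M Mstar) ∧
      P.Pairwise (fun p q => ∀ x : V, x ∈ p.2.2.support → x ∉ q.2.2.support) ∧
      (Mstar.card : ℤ) - (M.card : ℤ) ≤ (P.length : ℤ) := by
  classical
  set AF : Finset V := Finset.univ.filter (fun x => Acal M Mstar x) with hAF
  set Agood : Finset V := AF.filter (fun x => ¬ Even (plen M Mstar x)) with hAgood
  set Abad : Finset V := AF.filter (fun x => Even (plen M Mstar x)) with hAbad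
  have hAgoodmem : ∀ x ∈ Agood, Acal M Mstar x ∧ ¬ Even (plen M Mstar x) := by
    intro x hx
    rw [hAgood, Finset.mem_filter, hAF, Finset.mem_filter] at hx
    exact ⟨hx.1.2, hx.2⟩
  have hAbadmem : ∀ x ∈ Abad, Acal M Mstar x ∧ Even (plen M Mstar x) := by
    intro x hx
    rw [hAbad, Finset.mem_filter, hAF, Finset.mem_filter] at hx
    exact ⟨hx.1.2, hx.2⟩
  -- counting
  have hAFeq : AF = coverF Mstar \ coverF M := by
    ext x
    rw [hAF, Finset.mem_filter, Finset.mem_sdiff]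
    simp only [Finset.mem_univ, true_and, coverF, Finset.mem_filter]
    unfold Acal
    push_neg
    tauto
  have h1 : AF.card + (coverF Mstar ∩ coverF M).card = (coverF Mstar).card := by
    rw [hAFeq]
    exact Finset.card_sdiff_add_card_inter _ _
  have h2 : (coverF M \ coverF Mstar).card + (coverF M ∩ coverF Mstar).card
      = (coverF M).card := Finset.card_sdiff_add_card_inter _ _
  have hcc : (coverF Mstar ∩ coverF M).card = ((coverF M ∩ coverF Mstar) : Finset V).card := by
    rw [Finset.inter_comm]
  have h5 : (coverF Mstar).card = 2 * Mstar.card := coverF_card hMstar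
  have h6 : (coverF M).card = 2 * M.card := coverF_card hM
  have h3 : Abad.card ≤ ((coverF M \ coverF Mstar) : Finset V).card := by
    apply Finset.card_le_card_of_injOn (endp M Mstar)
    · intro x hxA
      obtain ⟨hx, heven⟩ := hAbadmem x hxA
      obtain ⟨hcov, hncov⟩ := endp_bad hM hMstar hx heven
      rw [Finset.mem_coe, Finset.mem_sdiff]
      constructor
      · simp only [coverF, Finset.mem_filter, Finset.mem_univ, true_and]
        exact hcov
      · simp only [coverF, Finset.mem_filter, Finset.mem_univ, true_and]
        push_neg
        exact fun e he => hncov e he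
    · intro x hx1 x' hx2 heq
      rw [Finset.mem_coe] at hx1 hx2
      obtain ⟨hxA, hxe⟩ := hAbadmem x hx1
      obtain ⟨hx'A, hx'e⟩ := hAbadmem x' hx2
      have hs1 : seqq M Mstar x (plen M Mstar x) = some (endp M Mstar x) :=
        endp_spec hM hMstar hxA
      have hs2 : seqq M Mstar x' (plen M Mstar x') = some (endp M Mstar x) := by
        rw [heq]
        exact endp_spec hM hMstar hx'A
      rcases two_path hM hMstar hxA hx'A _ _ _ hs1 hs2 with h | h | h
      · exact h
      · exfalso
        obtain ⟨e, he, hmem⟩ := (endp_bad hM hMstar hx'A hx'e).1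
        exact hxA.1 e he (h ▸ hmem)
      · exfalso
        obtain ⟨e, he, hmem⟩ := (endp_bad hM hMstar hxA hxe).1
        exact hx'A.1 e he (h ▸ hmem)
  have h4 : Abad.card + Agood.card = AF.card := by
    rw [hAbad, hAgood]
    exact Finset.card_filter_add_card_filter_not _
  have key : 2 * Mstar.card ≤ Agood.card + 2 * M.card := by omega
  -- pair selection on Agood
  have hclosed : ∀ a ∈ Agood, endp M Mstar a ∈ Agood := by
    intro a ha
    obtain ⟨hA, hodd⟩ := hAgoodmem a ha
    rw [hAgood, Finset.mem_filter, hAF, Finset.mem_filter]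
    refine ⟨⟨Finset.mem_univ _, endp_mem_Acal hM hMstar hA hodd⟩, ?_⟩
    rw [(plen_endp hM hMstar hA hodd).1]
    exact hodd
  have hinvol : ∀ a ∈ Agood, endp M Mstar (endp M Mstar a) = a := by
    intro a ha
    obtain ⟨hA, hodd⟩ := hAgoodmem a ha
    exact (plen_endp hM hMstar hA hodd).2
  have hnofix : ∀ a ∈ Agood, endp M Mstar a ≠ a := by
    intro a ha hc
    obtain ⟨hA, hodd⟩ := hAgoodmem a ha
    have hL : seqq M Mstar a (plen M Mstar a) = some a := by
      rw [endp_spec hM hMstar hA, hc]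
    exact seqq_inj hM hMstar hA (plen M Mstar a) 0 (plen_pos hM hMstar hA) a rfl hL
  obtain ⟨R, hRsub, hRdis, hRcard⟩ := pair_select (endp M Mstar) Agood hclosed hinvol hnofix
  have hRA : ∀ x ∈ R, Acal M Mstar x ∧ ¬ Even (plen M Mstar x) :=
    fun x hx => hAgoodmem x (hRsub hx)
  refine ⟨(R.attach.toList).map
    (fun a => ⟨a.1, endp M Mstar a.1, bigWalk hM hMstar (hRA a.1 a.2).1⟩), ?_, ?_, ?_⟩
  · intro p hp
    rw [List.mem_map] at hp
    obtain ⟨a, ha, rfl⟩ := hp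
    exact ⟨bigWalk_isAugmenting hM hMstar (hRA a.1 a.2).1 (hRA a.1 a.2).2,
      bigWalk_edges_symmDiff hM hMstar (hRA a.1 a.2).1⟩
  · rw [List.pairwise_map]
    have hnd : (R.attach.toList).Pairwise (· ≠ ·) := Finset.nodup_toList _
    refine List.Pairwise.imp_of_mem ?_ hnd
    intro a b ha hb hne y hy
    exact disjoint_supports hM hMstar (hRA a.1 a.2).1 (hRA b.1 b.2).1
      (fun h => hne (Subtype.ext h))
      (fun h => hRdis b.1 b.2 (h ▸ a.2))
      (fun h => hRdis a.1 a.2 (h ▸ b.2)) y hy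
  · have hlen : ((R.attach.toList).map
        (fun a => (⟨a.1, endp M Mstar a.1, bigWalk hM hMstar (hRA a.1 a.2).1⟩ :
          Σ u : V, Σ v : V, G.Walk u v))).length = R.card := by
      rw [List.length_map, Finset.length_toList, Finset.card_attach]
    rw [hlen]
    omega
end

section
/- Let G be a finite simple graph, let M be a matching in G, and let ε ∈ (0,1). If every augmenting path for M in G has length strictly greater than 4/ε, then |M| ≥ (1 − ε)·k_opt(G). -/
namespace AugAux

open SimpleGraph List

variable {V : Type*} [DecidableEq V]

/-- A vertex is exposed (uncovered) by `M`. -/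
def Exposed (M : Finset (Sym2 V)) (v : V) : Prop := ∀ e ∈ M, v ∉ e

/-- Unique partner in a matching. -/
lemma matching_unique {G : SimpleGraph V} {M : Finset (Sym2 V)} (hM : IsMatching G M)
    {u a b : V} (ha : s(u, a) ∈ M) (hb : s(u, b) ∈ M) : a = b := by
  by_cases h : s(u, a) = s(u, b)
  · rcases Sym2.eq_iff.mp h with ⟨-, h⟩ | ⟨h1, h2⟩
    · exact h
    · exact h2.trans h1
  · exact absurd (Sym2.mem_mk_left u b) (hM.2 _ ha _ hb h u (Sym2.mem_mk_left u a))

lemma matching_subset {G : SimpleGraph V} {M N : Finset (Sym2 V)} (hM : IsMatching G M)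
    (h : N ⊆ M) : IsMatching G N :=
  ⟨fun e he => hM.1 e (h he), fun e he f hf hef v hv => hM.2 e (h he) f (h hf) hef v hv⟩

/-- Edges alternate: `AltFrom M B b l` means the list `l` of edges (read from the
current end of the walk back to the start) has first edge of type `!b`
(`true` = a `B`-edge, `false` = an `M`-edge), alternates, and ends with a `B`-edge. -/
def AltFrom (M B : Finset (Sym2 V)) : Bool → List (Sym2 V) → Prop
  | b, [] => b = true
  | b, e :: l => (if b then e ∈ M else e ∈ B) ∧ AltFrom M B (!b) l

variable {M B : Finset (Sym2 V)}

lemma altFrom_typed {b : Bool} {l : List (Sym2 V)} (h : AltFrom M B b l) :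
    ∀ e ∈ l, e ∈ B ∨ e ∈ M := by
  induction l generalizing b with
  | nil => intro e he; simp at he
  | cons f l ih =>
    intro e he
    rcases List.mem_cons.mp he with he | he
    · subst he
      cases b with
      | true => exact Or.inr (by simpa using h.1)
      | false => exact Or.inl (by simpa using h.1)
    · exact ih h.2 e he

lemma altFrom_count (hBM : ∀ e ∈ B, e ∉ M) {b : Bool} {l : List (Sym2 V)}
    (h : AltFrom M B b l) :
    l.countP (· ∈ B) = l.countP (· ∈ M) + (if b then 0 else 1) := by
  classical
  induction l generalizing b with
  | nil =>
    cases b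
    · exact absurd h (by simp [AltFrom])
    · simp
  | cons e l ih =>
    have h2 := ih h.2
    cases b with
    | true =>
      have heM : e ∈ M := by simpa using h.1
      have heB : e ∉ B := fun hB => hBM e hB heM
      simp [List.countP_cons, heM, heB] at *
      omega
    | false =>
      have heB : e ∈ B := by simpa using h.1
      have heM : e ∉ M := hBM e heB
      simp [List.countP_cons, heM, heB] at *
      omega

lemma altFrom_length (hBM : ∀ e ∈ B, e ∉ M) {b : Bool} {l : List (Sym2 V)}
    (h : AltFrom M B b l) :
    l.length = l.countP (· ∈ B) + l.countP (· ∈ M) := by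
  classical
  induction l generalizing b with
  | nil => simp
  | cons e l ih =>
    have h2 := ih h.2
    rcases altFrom_typed h e (by simp) with hB | hM
    · have hM : e ∉ M := hBM e hB
      simp [List.countP_cons, hB, hM] at *
      omega
    · have hB : e ∉ B := fun hB => hBM e hB hM
      simp [List.countP_cons, hB, hM] at *
      omega

lemma altFrom_chain (hBM : ∀ e ∈ B, e ∉ M) {b : Bool} {l : List (Sym2 V)}
    (h : AltFrom M B b l) :
    List.Chain' (fun e f => (e ∈ M ↔ f ∉ M)) l := by
  induction l generalizing b with
  | nil => exact List.isChain_nil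
  | cons e l ih =>
    have tail := ih h.2
    rcases l with - | ⟨f, l⟩
    · exact List.isChain_singleton _
    · refine List.isChain_cons_cons.mpr ⟨?_, tail⟩
      cases b with
      | true =>
        have heM : e ∈ M := by simpa using h.1
        have hfB : f ∈ B := by simpa using h.2.1
        have hfM : f ∉ M := hBM f hfB
        simp [heM, hfM]
      | false =>
        have heB : e ∈ B := by simpa using h.1
        have heM : e ∉ M := hBM e heB
        have hfM : f ∈ M := by simpa using h.2.1
        simp [heM, hfM]

/-- Every `M`-edge on an alternating walk shares a vertex with a `B`-edge of the walk. -/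
lemma altFrom_M_adj_B (hBM : ∀ e ∈ B, e ∉ M) {G : SimpleGraph V} {v x : V}
    (w : G.Walk v x) :
    ∀ (b : Bool), AltFrom M B b w.edges →
      ∀ e ∈ w.edges, e ∈ M → ∃ u z, u ∈ e ∧ s(u, z) ∈ B ∧ s(u, z) ∈ w.edges := by
  induction w with
  | nil => intro b _ e he; simp at he
  | @cons v u₂ x hadj p ih =>
    intro b h e he hM
    rw [SimpleGraph.Walk.edges_cons] at he h
    rcases List.mem_cons.mp he with he | he
    · subst he
      cases b with
      | false => exact absurd hM (hBM _ (by simpa using h.1))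
      | true =>
        have h2 := h.2
        cases p with
        | nil => exact absurd h2 (by simp [AltFrom])
        | cons hadj₂ q =>
          rw [SimpleGraph.Walk.edges_cons] at h2
          refine ⟨u₂, _, Sym2.mem_mk_right v u₂, by simpa using h2.1, ?_⟩
          simp [SimpleGraph.Walk.edges_cons]
    · obtain ⟨u, z, hu, hB, hmem⟩ := ih (!b) h.2 e he hM
      exact ⟨u, z, hu, hB, by simp [SimpleGraph.Walk.edges_cons, hmem]⟩

/-- The core traversal lemma: starting from an exposed vertex, follow the forced
alternating walk until it either reaches another `M`-exposed vertex or a vertex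
with no incident `B`-edge. -/
lemma traverse [Fintype V] {G : SimpleGraph V}
    (hMu : ∀ ⦃u a b : V⦄, s(u, a) ∈ M → s(u, b) ∈ M → a = b)
    (hBu : ∀ ⦃u a b : V⦄, s(u, a) ∈ B → s(u, b) ∈ B → a = b)
    (hMG : ∀ e ∈ M, e ∈ G.edgeSet) (hBG : ∀ e ∈ B, e ∈ G.edgeSet)
    (hBM : ∀ e ∈ B, e ∉ M)
    (F : Finset V)
    (hF2 : ∀ u z : V, s(u, z) ∈ M → u ∈ F → z ∈ F)
    (hFB : ∀ u z : V, s(u, z) ∈ B → u ∉ F)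
    {x : V} (hx : Exposed M x) :
    ∀ (n : ℕ) (b : Bool) (v : V) (w : G.Walk v x),
      Fintype.card V ≤ w.length + n →
      w.IsPath → AltFrom M B b w.edges →
      (∀ u ∈ w.support, u ∉ F) →
      (∀ u ∈ w.support, u ≠ v → ∀ z, (s(u, z) ∈ B ∨ s(u, z) ∈ M) → s(u, z) ∈ w.edges) →
      ∃ (v' : V) (w' : G.Walk v' x),
        w'.IsPath ∧
        (∀ u ∈ w'.support, u ∉ F) ∧
        (∀ u ∈ w'.support, ∀ z, (s(u, z) ∈ B ∨ s(u, z) ∈ M) → s(u, z) ∈ w'.edges) ∧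
        ((AltFrom M B false w'.edges ∧ Exposed M v') ∨
          (AltFrom M B true w'.edges ∧ ∀ z, s(v', z) ∉ B)) := by
  intro n
  induction n with
  | zero =>
    intro b v w hcard hp _ _ _
    exfalso
    have h1 : w.support.length ≤ Fintype.card V := hp.support_nodup.length_le_card
    rw [SimpleGraph.Walk.length_support] at h1
    omega
  | succ n ih =>
    intro b v w hcard hp halt hFs hINV
    -- helper: the head edge of a nonnil walk
    have headM : b = true → ∀ z, s(v, z) ∈ M → s(v, z) ∈ w.edges := by
      intro hb z hz
      cases w with
      | nil => exact absurd (Sym2.mem_mk_left _ z) (hx _ hz)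
      | @cons _ y _ hadj p =>
        rw [SimpleGraph.Walk.edges_cons] at halt ⊢
        subst hb
        have hM1 : s(v, y) ∈ M := by simpa using halt.1
        have := hMu hz hM1
        subst this
        exact List.mem_cons_self
    have headB : b = false → ∀ z, s(v, z) ∈ B → s(v, z) ∈ w.edges := by
      intro hb z hz
      subst hb
      cases w with
      | nil => exact absurd halt (by simp [AltFrom])
      | @cons _ y _ hadj p =>
        rw [SimpleGraph.Walk.edges_cons] at halt ⊢
        have hB1 : s(v, y) ∈ B := by simpa using halt.1
        have := hBu hz hB1
        subst this
        exact List.mem_cons_self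
    -- no revisiting: a B- or M-edge from `v` leads outside the support (or is absurd)
    have fresh : ∀ z, (s(v, z) ∈ B ∨ s(v, z) ∈ M) → s(v, z) ∉ w.edges → z ∉ w.support := by
      intro z hz hznew hzs
      have hvz : v ≠ z := by
        rcases hz with h | h
        · exact (G.mem_edgeSet.mp (hBG _ h)).ne
        · exact (G.mem_edgeSet.mp (hMG _ h)).ne
      by_cases hzv : z = v
      · exact hvz hzv.symm
      · have := hINV z hzs hzv v (by rw [Sym2.eq_swap]; exact hz)
        rw [Sym2.eq_swap] at this
        exact hznew this
    cases b with
    | true =>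
      by_cases hB : ∃ z, s(v, z) ∈ B
      · obtain ⟨z, hz⟩ := hB
        have hznew : s(v, z) ∉ w.edges := by
          intro hmem
          cases w with
          | nil => simp at hmem
          | cons hadj p =>
            rw [SimpleGraph.Walk.edges_cons] at hmem halt
            rcases List.mem_cons.mp hmem with hh | hh
            · have : s(v, z) ∈ M := by rw [hh]; simpa using halt.1
              exact hBM _ hz this
            · have : v ∈ p.support := p.fst_mem_support_of_mem_edges hh
              have hnodup := hp.support_nodup
              rw [SimpleGraph.Walk.support_cons] at hnodup
              exact (List.nodup_cons.mp hnodup).1 this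
        have hzs : z ∉ w.support := fresh z (Or.inl hz) hznew
        have hadj : G.Adj z v := (G.mem_edgeSet.mp (hBG _ hz)).symm
        have hzF : z ∉ F := hFB z v (by rw [Sym2.eq_swap]; exact hz)
        refine ih false z (w.cons hadj) ?_ (hp.cons hzs) ?_ ?_ ?_
        · rw [SimpleGraph.Walk.length_cons]; omega
        · rw [SimpleGraph.Walk.edges_cons]
          exact ⟨by rw [Sym2.eq_swap]; simpa using hz, halt⟩
        · intro u hu
          rw [SimpleGraph.Walk.support_cons] at hu
          rcases List.mem_cons.mp hu with hu | hu
          · subst hu; exact hzF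
          · exact hFs u hu
        · intro u hu huz z' hz'
          rw [SimpleGraph.Walk.support_cons] at hu
          rw [SimpleGraph.Walk.edges_cons]
          rcases List.mem_cons.mp hu with hu | hu
          · exact absurd hu huz
          · by_cases huv : u = v
            · subst huv
              rcases hz' with h' | h'
              · have := hBu hz h'
                subst this
                rw [Sym2.eq_swap]
                exact List.mem_cons_self
              · exact List.mem_cons_of_mem _ (headM rfl z' h')
            · exact List.mem_cons_of_mem _ (hINV u hu huv z' hz')
      · push_neg at hB
        refine ⟨v, w, hp, hFs, ?_, Or.inr ⟨halt, hB⟩⟩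
        intro u hu z hz
        by_cases huv : u = v
        · subst huv
          rcases hz with h' | h'
          · exact absurd h' (hB z)
          · exact headM rfl z h'
        · exact hINV u hu huv z hz
    | false =>
      by_cases hexp : Exposed M v
      · refine ⟨v, w, hp, hFs, ?_, Or.inl ⟨halt, hexp⟩⟩
        intro u hu z hz
        by_cases huv : u = v
        · subst huv
          rcases hz with h' | h'
          · exact headB rfl z h'
          · exact absurd (Sym2.mem_mk_left _ z) (hexp _ h')
        · exact hINV u hu huv z hz
      · have : ∃ z, s(v, z) ∈ M := by
          simp only [Exposed, not_forall] at hexp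
          obtain ⟨e, he, hve⟩ := hexp
          obtain ⟨z, rfl⟩ := Sym2.mem_iff_exists.mp (not_not.mp hve)
          exact ⟨z, he⟩
        obtain ⟨z, hz⟩ := this
        have hznew : s(v, z) ∉ w.edges := by
          intro hmem
          cases w with
          | nil => simp at hmem
          | cons hadj p =>
            rw [SimpleGraph.Walk.edges_cons] at hmem halt
            rcases List.mem_cons.mp hmem with hh | hh
            · have : s(v, z) ∈ B := by rw [hh]; simpa using halt.1
              exact hBM _ this hz
            · have : v ∈ p.support := p.fst_mem_support_of_mem_edges hh
              have hnodup := hp.support_nodup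
              rw [SimpleGraph.Walk.support_cons] at hnodup
              exact (List.nodup_cons.mp hnodup).1 this
        have hzs : z ∉ w.support := fresh z (Or.inr hz) hznew
        have hadj : G.Adj z v := (G.mem_edgeSet.mp (hMG _ hz)).symm
        have hvF : v ∉ F := hFs v w.start_mem_support
        have hzF : z ∉ F := fun hzF =>
          hvF (hF2 z v (by rw [Sym2.eq_swap]; exact hz) hzF)
        refine ih true z (w.cons hadj) ?_ (hp.cons hzs) ?_ ?_ ?_
        · rw [SimpleGraph.Walk.length_cons]; omega
        · rw [SimpleGraph.Walk.edges_cons]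
          exact ⟨by rw [Sym2.eq_swap]; simpa using hz, halt⟩
        · intro u hu
          rw [SimpleGraph.Walk.support_cons] at hu
          rcases List.mem_cons.mp hu with hu | hu
          · subst hu; exact hzF
          · exact hFs u hu
        · intro u hu huz z' hz'
          rw [SimpleGraph.Walk.support_cons] at hu
          rw [SimpleGraph.Walk.edges_cons]
          rcases List.mem_cons.mp hu with hu | hu
          · exact absurd hu huz
          · by_cases huv : u = v
            · subst huv
              rcases hz' with h' | h'
              · exact List.mem_cons_of_mem _ (headB rfl z' h')
              · have := hMu hz h'
                subst this
                rw [Sym2.eq_swap]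
                exact List.mem_cons_self
            · exact List.mem_cons_of_mem _ (hINV u hu huv z' hz')

/-- Vertices covered by a set of edges. -/
noncomputable def cov [Fintype V] (A : Finset (Sym2 V)) : Finset V :=
  A.biUnion fun e => Finset.univ.filter (· ∈ e)

lemma mem_cov [Fintype V] {A : Finset (Sym2 V)} {x : V} :
    x ∈ cov A ↔ ∃ e ∈ A, x ∈ e := by
  simp [cov]

lemma cov_card [Fintype V] {G : SimpleGraph V} {A : Finset (Sym2 V)}
    (hA : IsMatching G A) : (cov A).card = 2 * A.card := by
  rw [cov, Finset.card_biUnion]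
  · rw [Finset.sum_congr rfl (fun e he => ?_), Finset.sum_const, smul_eq_mul, mul_comm]
    have hGe := hA.1 e he
    induction e with
    | h a b =>
      have hab : a ≠ b := (G.mem_edgeSet.mp hGe).ne
      have : Finset.univ.filter (· ∈ s(a, b)) = {a, b} := by
        ext u
        simp [Sym2.mem_iff]
      rw [this, Finset.card_pair hab]
  · intro e he f hf hef
    show _root_.Disjoint (Finset.univ.filter fun x => x ∈ e) (Finset.univ.filter fun x => x ∈ f)
    rw [Finset.disjoint_filter]
    intro u _ hue huf
    exact hA.2 e he f hf hef u hue huf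

/-- The main peeling induction. -/
lemma peel [Fintype V] {G : SimpleGraph V} {M : Finset (Sym2 V)} (hM : IsMatching G M)
    {ε : ℝ} (hε : ε ∈ Set.Ioo (0 : ℝ) 1)
    (hlong : ∀ (u v : V) (w : G.Walk u v),
      IsAugmentingPath G M w → 4 / ε < (w.length : ℝ)) :
    ∀ (n : ℕ) (N' : Finset (Sym2 V)) (F : Finset V),
      N'.card ≤ n → IsMatching G N' →
      (∀ u z : V, s(u, z) ∈ M → u ∈ F → z ∈ F) →
      (∀ e ∈ N', ∀ u : V, u ∈ e → u ∉ F) →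
      (N'.card : ℝ) ≤ ((M.filter fun e => ∀ u : V, u ∈ e → u ∉ F).card : ℝ) *
        (1 + 1 / (2 / ε - 1 / 2)) := by
  classical
  obtain ⟨hε0, hε1⟩ := hε
  set t : ℝ := 2 / ε - 1 / 2 with ht_def
  have ht : (3 : ℝ) / 2 < t := by
    have : (2 : ℝ) < 2 / ε := by
      rw [lt_div_iff₀ hε0]; nlinarith
    simp only [ht_def]; linarith
  have ht0 : (0 : ℝ) < t := lt_trans (by norm_num) ht
  intro n
  induction n with
  | zero =>
    intro N' F hn _ _ _
    have h0 : N'.card = 0 := Nat.le_zero.mp hn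
    rw [h0]
    have h1 : (0:ℝ) < 1 + 1/t := by nlinarith [one_div_pos.mpr ht0]
    exact le_trans (by norm_num) (mul_nonneg (Nat.cast_nonneg _) (le_of_lt h1))
  | succ n ih =>
    intro N' F hn hN' hF2 hF3
    set Mf : Finset (Sym2 V) := M.filter fun e => ∀ u : V, u ∈ e → u ∉ F with hMf_def
    by_cases hdone : N'.card ≤ Mf.card
    · calc (N'.card : ℝ) ≤ (Mf.card : ℝ) := by exact_mod_cast hdone
        _ ≤ (Mf.card : ℝ) * (1 + 1 / t) := by
            nlinarith [Nat.cast_nonneg (α := ℝ) Mf.card, one_div_pos.mpr ht0]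
    · push_neg at hdone
      -- find an M-exposed, N'-covered vertex
      have hMfm : IsMatching G Mf := matching_subset hM (Finset.filter_subset _ _)
      have hcards : (cov Mf).card < (cov N').card := by
        rw [cov_card hMfm, cov_card hN']; omega
      have hns : ¬ (cov N' ⊆ cov Mf) := fun h =>
        absurd (Finset.card_le_card h) (not_le.mpr hcards)
      obtain ⟨x, hxN, hxMf⟩ := Finset.not_subset.mp hns
      obtain ⟨e₀, he₀N, hxe₀⟩ := mem_cov.mp hxN
      have hxF : x ∉ F := hF3 e₀ he₀N x hxe₀
      have hx : Exposed M x := by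
        intro e he hxe
        obtain ⟨y, rfl⟩ := Sym2.mem_iff_exists.mp hxe
        have hyF : y ∉ F := fun hyF => hxF (hF2 y x (by rw [Sym2.eq_swap]; exact he) hyF)
        have heMf : s(x, y) ∈ Mf := by
          rw [hMf_def, Finset.mem_filter]
          exact ⟨he, fun u hu => by
            rcases Sym2.mem_iff.mp hu with rfl | rfl
            · exact hxF
            · exact hyF⟩
        exact hxMf (mem_cov.mpr ⟨_, heMf, Sym2.mem_mk_left x y⟩)
      set B : Finset (Sym2 V) := N' \ M with hB_def
      have he₀B : e₀ ∈ B := by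
        rw [hB_def, Finset.mem_sdiff]
        exact ⟨he₀N, fun hc => hx e₀ hc hxe₀⟩
      have hBN' : B ⊆ N' := Finset.sdiff_subset
      have hMu : ∀ ⦃u a b : V⦄, s(u, a) ∈ M → s(u, b) ∈ M → a = b := fun u a b ha hb =>
        matching_unique hM ha hb
      have hBu : ∀ ⦃u a b : V⦄, s(u, a) ∈ B → s(u, b) ∈ B → a = b := fun u a b ha hb =>
        matching_unique (matching_subset hN' hBN') ha hb
      have hMG : ∀ e ∈ M, e ∈ G.edgeSet := hM.1
      have hBG : ∀ e ∈ B, e ∈ G.edgeSet := fun e he => hN'.1 e (hBN' he)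
      have hBM : ∀ e ∈ B, e ∉ M := fun e he => (Finset.mem_sdiff.mp he).2
      have hFB : ∀ u z : V, s(u, z) ∈ B → u ∉ F := fun u z h =>
        hF3 _ (hBN' h) u (Sym2.mem_mk_left u z)
      obtain ⟨v', w', hp', hFs', hCLOSED, hcase⟩ :=
        traverse hMu hBu hMG hBG hBM F hF2 hFB hx (Fintype.card V) true x .nil
          (by simp) SimpleGraph.Walk.IsPath.nil rfl
          (by intro u hu; rw [SimpleGraph.Walk.support_nil] at hu; simp at hu; simpa [hu])
          (by intro u hu hux; rw [SimpleGraph.Walk.support_nil] at hu; simp at hu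
              exact absurd hu hux)
      set l : List (Sym2 V) := w'.edges with hl_def
      have hlnd : l.Nodup := hp'.edges_nodup
      obtain ⟨y₀, he₀⟩ := Sym2.mem_iff_exists.mp hxe₀
      have he₀l : e₀ ∈ l := by
        rw [he₀] at he₀B ⊢
        exact hCLOSED x w'.end_mem_support y₀ (Or.inl he₀B)
      -- M-type edges of the walk are not in N'
      have hMnotN : ∀ e ∈ l, e ∈ M → e ∉ N' := by
        intro e hel heM heN
        have halt' : ∃ b, AltFrom M B b l := by
          rcases hcase with ⟨h, -⟩ | ⟨h, -⟩
          exacts [⟨false, h⟩, ⟨true, h⟩]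
        obtain ⟨b, hb⟩ := halt'
        obtain ⟨u, z, hue, huzB, -⟩ := altFrom_M_adj_B hBM w' b hb e hel heM
        have hne : e ≠ s(u, z) := fun hc => hBM _ huzB (hc ▸ heM)
        exact hN'.2 e heN _ (hBN' huzB) hne u hue (Sym2.mem_mk_left u z)
      set cB : ℕ := l.countP (· ∈ B) with hcB_def
      set cM : ℕ := l.countP (· ∈ M) with hcM_def
      have hinter : N' ∩ l.toFinset = (l.filter (· ∈ B)).toFinset := by
        ext e
        simp only [Finset.mem_inter, List.mem_toFinset, List.mem_filter, decide_eq_true_eq]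
        constructor
        · rintro ⟨heN, hel⟩
          refine ⟨hel, ?_⟩
          rcases hcase with ⟨h, -⟩ | ⟨h, -⟩ <;>
            rcases altFrom_typed h e hel with hB | hM
          exacts [hB, absurd heN (hMnotN e hel hM), hB, absurd heN (hMnotN e hel hM)]
        · rintro ⟨hel, heB⟩
          exact ⟨hBN' heB, hel⟩
      have hinter_card : (N' ∩ l.toFinset).card = cB := by
        rw [hinter, List.toFinset_card_of_nodup (hlnd.filter _), hcB_def,
          List.countP_eq_length_filter]
      have hcB1 : 1 ≤ cB := by
        rw [hcB_def]
        refine List.countP_pos_iff.mpr ⟨e₀, he₀l, by simpa using he₀B⟩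
      set N'' : Finset (Sym2 V) := N' \ l.toFinset with hN''_def
      set F' : Finset V := F ∪ w'.support.toFinset with hF'_def
      have hsplitN : N''.card + cB = N'.card := by
        rw [← hinter_card, hN''_def]
        rw [add_comm]
        exact Finset.card_inter_add_card_sdiff N' l.toFinset
      -- endpoints of walk edges are in the support and avoid F
      have hedge_supp : ∀ e ∈ l, ∀ u : V, u ∈ e → u ∈ w'.support := by
        intro e hel u hue
        obtain ⟨z, rfl⟩ := Sym2.mem_iff_exists.mp hue
        exact w'.fst_mem_support_of_mem_edges hel
      set Mf' : Finset (Sym2 V) := M.filter (fun e => ∀ u : V, u ∈ e → u ∉ F') with hMf'_def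
      set T : Finset (Sym2 V) := (l.filter (· ∈ M)).toFinset with hT_def
      have hT_card : T.card = cM := by
        rw [hT_def, List.toFinset_card_of_nodup (hlnd.filter _), hcM_def,
          List.countP_eq_length_filter]
      have hTMf : T ⊆ Mf := by
        intro e he
        rw [hT_def, List.mem_toFinset, List.mem_filter, decide_eq_true_eq] at he
        rw [hMf_def, Finset.mem_filter]
        exact ⟨he.2, fun u hu => hFs' u (hedge_supp e he.1 u hu)⟩
      have hMf' : Mf' = Mf \ T := by
        ext e
        rw [hMf'_def, Finset.mem_filter, Finset.mem_sdiff, hMf_def, Finset.mem_filter,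
          hT_def, List.mem_toFinset, List.mem_filter, decide_eq_true_eq, hF'_def]
        constructor
        · rintro ⟨heM, hav⟩
          refine ⟨⟨heM, fun u hu => fun hc => hav u hu (Finset.mem_union_left _ hc)⟩, ?_⟩
          rintro ⟨hel, -⟩
          exact hav e.out.1 (Sym2.out_fst_mem e)
            (Finset.mem_union_right _ (List.mem_toFinset.mpr
              (hedge_supp e hel e.out.1 (Sym2.out_fst_mem e))))
        · rintro ⟨⟨heM, hav⟩, hnT⟩
          refine ⟨heM, fun u hu hc => ?_⟩
          rcases Finset.mem_union.mp hc with hc | hc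
          · exact hav u hu hc
          · rw [List.mem_toFinset] at hc
            obtain ⟨z, rfl⟩ := Sym2.mem_iff_exists.mp hu
            exact hnT ⟨hCLOSED u hc z (Or.inr heM), heM⟩
      have hn'' : N''.card ≤ n := by omega
      have hN''m : IsMatching G N'' := matching_subset hN' Finset.sdiff_subset
      have hF2' : ∀ u z : V, s(u, z) ∈ M → u ∈ F' → z ∈ F' := by
        intro u z hMe huF'
        rcases Finset.mem_union.mp huF' with hc | hc
        · exact Finset.mem_union_left _ (hF2 u z hMe hc)
        · rw [List.mem_toFinset] at hc
          have hel : s(u, z) ∈ l := hCLOSED u hc z (Or.inr hMe)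
          exact Finset.mem_union_right _ (List.mem_toFinset.mpr
            (hedge_supp _ hel z (Sym2.mem_mk_right u z)))
      have hF3' : ∀ e ∈ N'', ∀ u : V, u ∈ e → u ∉ F' := by
        intro e heN'' u hue hcF'
        rw [hN''_def, Finset.mem_sdiff] at heN''
        rcases Finset.mem_union.mp hcF' with hc | hc
        · exact hF3 e heN''.1 u hue hc
        · rw [List.mem_toFinset] at hc
          obtain ⟨z, rfl⟩ := Sym2.mem_iff_exists.mp hue
          by_cases heM : s(u, z) ∈ M
          · exact heN''.2 (List.mem_toFinset.mpr (hCLOSED u hc z (Or.inr heM)))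
          · have heB : s(u, z) ∈ B := by
              rw [hB_def, Finset.mem_sdiff]; exact ⟨heN''.1, heM⟩
            exact heN''.2 (List.mem_toFinset.mpr (hCLOSED u hc z (Or.inl heB)))
      have hIH := ih N'' F' hn'' hN''m hF2' hF3'
      rw [← hMf'_def] at hIH
      have hsplitM : Mf'.card + cM = Mf.card := by
        have h := Finset.card_sdiff_add_card_eq_card hTMf
        rw [← hMf'] at h
        rw [← hT_card]
        exact h
      have hq : (0:ℝ) < 1/t := one_div_pos.mpr ht0
      have htq : t * (1/t) = 1 := mul_one_div_cancel (ne_of_gt ht0)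
      have e1 : (N'.card:ℝ) = (N''.card:ℝ) + (cB:ℝ) := by exact_mod_cast hsplitN.symm
      have e2 : (Mf'.card:ℝ) = (Mf.card:ℝ) - (cM:ℝ) := by
        have : (Mf'.card:ℝ) + (cM:ℝ) = (Mf.card:ℝ) := by exact_mod_cast hsplitM
        linarith
      have e4 : (Mf'.card:ℝ) * (1/t) = (Mf.card:ℝ) * (1/t) - (cM:ℝ) * (1/t) := by
        rw [e2]; ring
      rcases hcase with ⟨halt', hexp'⟩ | ⟨halt', hdead⟩
      · -- augmenting path found
        have hlen : w'.length = l.length := (SimpleGraph.Walk.length_edges w').symm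
        have hlne : l ≠ [] := by
          intro hc; rw [hc] at halt'; exact absurd halt' (by simp [AltFrom])
        have hlen0 : 0 < w'.length := by
          rw [hlen]; exact List.length_pos_iff.mpr hlne
        have haug : IsAugmentingPath G M w' :=
          ⟨hp', hlen0, altFrom_chain hBM halt', hexp', hx⟩
        have hlong' := hlong _ _ w' haug
        have hcnt := altFrom_count hBM halt'
        have hcnt' : cB = cM + 1 := by simpa using hcnt
        have hlencnt := altFrom_length hBM halt'
        have hlen2 : l.length = 2 * cM + 1 := by omega
        have hlenR : (w'.length : ℝ) = 2 * (cM:ℝ) + 1 := by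
          rw [hlen, hlen2]; push_cast; ring
        have h4e : 4/ε = 2*t + 1 := by rw [ht_def]; ring
        have hcMt : t ≤ (cM:ℝ) := by
          rw [h4e] at hlong'; rw [hlenR] at hlong'; linarith
        have key : (1:ℝ) ≤ (cM:ℝ) * (1/t) := by
          calc (1:ℝ) = t * (1/t) := htq.symm
            _ ≤ (cM:ℝ) * (1/t) := mul_le_mul_of_nonneg_right hcMt (le_of_lt hq)
        have e3 : (cB:ℝ) = (cM:ℝ) + 1 := by exact_mod_cast hcnt'
        have hIH2 : (N''.card:ℝ) ≤ (Mf'.card:ℝ) * 1 + (Mf'.card:ℝ) * (1/t) := by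
          rw [← mul_add]; exact hIH
        rw [mul_add, mul_one]
        linarith [hIH2, e1, e3, e4, key, e2]
      · -- dead end
        have hcnt := altFrom_count hBM halt'
        have hcnt' : cB = cM := by simpa using hcnt
        have e3 : (cB:ℝ) = (cM:ℝ) := by exact_mod_cast hcnt'
        have key : (0:ℝ) ≤ (cM:ℝ) * (1/t) := by positivity
        have hIH2 : (N''.card:ℝ) ≤ (Mf'.card:ℝ) * 1 + (Mf'.card:ℝ) * (1/t) := by
          rw [← mul_add]; exact hIH
        rw [mul_add, mul_one]
        linarith [hIH2, e1, e3, e4, key, e2]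

end AugAux

/-- If every augmenting path for `M` in `G` has length strictly greater than `4/ε`,
then `|M| ≥ (1 - ε) k_opt(G)`. -/
theorem no_short_augmenting_path_implies_approx {V : Type*} [Fintype V]
    (G : SimpleGraph V) (M : Finset (Sym2 V)) (hM : IsMatching G M)
    (ε : ℝ) (hε : ε ∈ Set.Ioo (0 : ℝ) 1) (kopt : ℕ)
    (hkopt : IsGreatest {n | ∃ N : Finset (Sym2 V), IsMatching G N ∧ N.card = n} kopt)
    (hlong : ∀ (u v : V) (w : G.Walk u v),
      IsAugmentingPath G M w → 4 / ε < (w.length : ℝ)) :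
    (1 - ε) * kopt ≤ (M.card : ℝ) := by
  classical
  obtain ⟨N, hN, hNcard⟩ := hkopt.1
  obtain ⟨hε0, hε1⟩ := hε
  have hpeel := AugAux.peel hM ⟨hε0, hε1⟩ hlong N.card N ∅ le_rfl hN
    (by intro u z _ h; simp at h) (by intro e _ u _ h; simp at h)
  have hfilter : (M.filter fun e => ∀ u : V, u ∈ e → u ∉ (∅ : Finset V)) = M := by
    apply Finset.filter_true_of_mem
    intro e _ u _ h
    simp at h
  rw [hfilter, hNcard] at hpeel
  set t : ℝ := 2 / ε - 1 / 2 with ht_def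
  have ht : (3 : ℝ) / 2 < t := by
    have : (2 : ℝ) < 2 / ε := by
      rw [lt_div_iff₀ hε0]; nlinarith
    rw [ht_def]; linarith
  have ht0 : (0 : ℝ) < t := lt_trans (by norm_num) ht
  have h4 : (0:ℝ) < 4 - ε := by linarith
  have hteq : t = (4 - ε)/(2*ε) := by
    rw [ht_def]; field_simp; ring
  have h1t : 1/t = 2*ε/(4-ε) := by rw [hteq, one_div_div]
  -- (1-ε)(1+1/t) ≤ 1
  have hfac : (1 - ε) * (1 + 1/t) ≤ 1 := by
    rw [h1t]
    have hsum : 1 + 2*ε/(4-ε) = (4+ε)/(4-ε) := by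
      field_simp
      ring
    rw [hsum, mul_div_assoc', div_le_one h4]
    nlinarith
  have hM0 : (0:ℝ) ≤ (M.card : ℝ) := Nat.cast_nonneg _
  have h1e : (0:ℝ) ≤ 1 - ε := by linarith
  calc (1 - ε) * (kopt : ℝ) ≤ (1 - ε) * ((M.card : ℝ) * (1 + 1/t)) :=
        mul_le_mul_of_nonneg_left hpeel h1e
    _ = (M.card : ℝ) * ((1 - ε) * (1 + 1/t)) := by ring
    _ ≤ (M.card : ℝ) * 1 := mul_le_mul_of_nonneg_left hfac hM0
    _ = (M.card : ℝ) := mul_one _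
end

section
/- Every closed disk of radius 1 in the plane ℝ² contains at least one and at most five points of the integer grid ℤ². -/
/-- The Euclidean plane `ℝ²`. -/
abbrev Plane := EuclideanSpace ℝ (Fin 2)

/-- The integer grid `ℤ²`: points of the plane with both coordinates integers. -/
def intGrid : Set Plane := {p | ∃ m n : ℤ, p 0 = (m : ℝ) ∧ p 1 = (n : ℝ)}

/-- The grid point `(m, n)` as a point of the plane. -/
noncomputable def gp (m n : ℤ) : Plane := (WithLp.equiv 2 (Fin 2 → ℝ)).symm ![(m : ℝ), (n : ℝ)]

lemma gp_apply0 (m n : ℤ) : gp m n 0 = (m : ℝ) := rfl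
lemma gp_apply1 (m n : ℤ) : gp m n 1 = (n : ℝ) := rfl

lemma mem_iff_gp (c p : Plane) :
    p ∈ Metric.closedBall c 1 ∩ intGrid ↔
      ∃ m n : ℤ, p = gp m n ∧ ((m : ℝ) - c 0) ^ 2 + ((n : ℝ) - c 1) ^ 2 ≤ 1 := by
  have hdist : ∀ m n : ℤ, dist (gp m n) c ≤ 1 ↔
      ((m : ℝ) - c 0) ^ 2 + ((n : ℝ) - c 1) ^ 2 ≤ 1 := by
    intro m n
    rw [EuclideanSpace.dist_eq, Fin.sum_univ_two, gp_apply0, gp_apply1,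
      Real.dist_eq, Real.dist_eq, sq_abs, sq_abs, Real.sqrt_le_one]
  constructor
  · rintro ⟨hb, m, n, h0, h1⟩
    have hp : p = gp m n := by
      ext i
      fin_cases i
      · exact h0
      · exact h1
    refine ⟨m, n, hp, ?_⟩
    rw [← hdist, ← hp]
    exact Metric.mem_closedBall.mp hb
  · rintro ⟨m, n, hp, h⟩
    subst hp
    exact ⟨Metric.mem_closedBall.mpr ((hdist m n).mpr h), m, n, rfl, rfl⟩

/-- Key trichotomy for the first coordinate of a grid point in the unit disk. -/
lemma key (x y : ℝ) (m n : ℤ)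
    (h : ((m : ℝ) - x) ^ 2 + ((n : ℝ) - y) ^ 2 ≤ 1) :
    m = ⌊x⌋ ∨ m = ⌊x⌋ + 1 ∨
      (m = ⌊x⌋ - 1 ∧ x = (⌊x⌋ : ℝ) ∧ y = (⌊y⌋ : ℝ) ∧ n = ⌊y⌋) := by
  have hx1 : (⌊x⌋ : ℝ) ≤ x := Int.floor_le x
  have hx2 : x < ⌊x⌋ + 1 := Int.lt_floor_add_one x
  have hy1 : (⌊y⌋ : ℝ) ≤ y := Int.floor_le y
  have hy2 : y < ⌊y⌋ + 1 := Int.lt_floor_add_one y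
  have hsq : ((m : ℝ) - x) ^ 2 ≤ 1 := by nlinarith [sq_nonneg ((n : ℝ) - y)]
  have hub : (m : ℝ) < (⌊x⌋ : ℝ) + 2 := by nlinarith
  have hlb : ((⌊x⌋ : ℝ)) - 1 ≤ (m : ℝ) := by nlinarith
  have hub' : m ≤ ⌊x⌋ + 1 := by
    have : (m : ℝ) < ((⌊x⌋ + 2 : ℤ) : ℝ) := by push_cast; linarith
    have := Int.cast_lt.mp this
    omega
  have hlb' : ⌊x⌋ - 1 ≤ m := by
    have : ((⌊x⌋ - 1 : ℤ) : ℝ) ≤ (m : ℝ) := by push_cast; linarith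
    exact_mod_cast this
  rcases show m = ⌊x⌋ ∨ m = ⌊x⌋ + 1 ∨ m = ⌊x⌋ - 1 by omega with h1 | h1 | h1
  · exact Or.inl h1
  · exact Or.inr (Or.inl h1)
  · refine Or.inr (Or.inr ⟨h1, ?_, ?_, ?_⟩)
    all_goals
      have hm : (m : ℝ) = (⌊x⌋ : ℝ) - 1 := by rw [h1]; push_cast; ring
    · nlinarith [sq_nonneg ((n : ℝ) - y)]
    all_goals
      have hx0 : x = (⌊x⌋ : ℝ) := by nlinarith [sq_nonneg ((n : ℝ) - y)]
      have hny : (n : ℝ) = y := by nlinarith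
      have hnb : (n : ℝ) = (⌊y⌋ : ℝ) := by
        have h1' : ((⌊y⌋ : ℤ) : ℝ) ≤ (n : ℝ) := by linarith
        have h2' : (n : ℝ) < ((⌊y⌋ + 1 : ℤ) : ℝ) := by push_cast; linarith
        have h1'' : (⌊y⌋ : ℤ) ≤ n := by exact_mod_cast h1'
        have h2'' : n < ⌊y⌋ + 1 := by exact_mod_cast h2'
        have : n = ⌊y⌋ := by omega
        rw [this]
    · linarith
    · exact_mod_cast hnb

lemma ncard_le_five (p1 p2 p3 p4 p5 : Plane) :
    ({p1, p2, p3, p4, p5} : Set Plane).ncard ≤ 5 := by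
  calc ({p1, p2, p3, p4, p5} : Set Plane).ncard
      ≤ ({p2, p3, p4, p5} : Set Plane).ncard + 1 := Set.ncard_insert_le _ _
    _ ≤ (({p3, p4, p5} : Set Plane).ncard + 1) + 1 :=
        Nat.add_le_add_right (Set.ncard_insert_le _ _) 1
    _ ≤ ((({p4, p5} : Set Plane).ncard + 1) + 1) + 1 :=
        Nat.add_le_add_right (Nat.add_le_add_right (Set.ncard_insert_le _ _) 1) 1
    _ ≤ (((({p5} : Set Plane).ncard + 1) + 1) + 1) + 1 :=
        Nat.add_le_add_right (Nat.add_le_add_right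
          (Nat.add_le_add_right (Set.ncard_insert_le _ _) 1) 1) 1
    _ = 5 := by rw [Set.ncard_singleton]

lemma finite_five (p1 p2 p3 p4 p5 : Plane) :
    ({p1, p2, p3, p4, p5} : Set Plane).Finite :=
  ((((Set.finite_singleton p5).insert p4).insert p3).insert p2).insert p1

/-- Every closed disk of radius 1 in the plane contains at least one and at most
five points of the integer grid `ℤ²`. -/
theorem unit_disk_grid_points (c : Plane) :
    (Metric.closedBall c 1 ∩ intGrid).Finite ∧
    1 ≤ (Metric.closedBall c 1 ∩ intGrid).ncard ∧
    (Metric.closedBall c 1 ∩ intGrid).ncard ≤ 5 := by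
  obtain ⟨T, hsub, hTfin, hT5⟩ : ∃ T : Set Plane,
      Metric.closedBall c 1 ∩ intGrid ⊆ T ∧ T.Finite ∧ T.ncard ≤ 5 := by
    by_cases hc : c 0 = ((⌊c 0⌋ : ℤ) : ℝ) ∧ c 1 = ((⌊c 1⌋ : ℤ) : ℝ)
    · refine ⟨{gp ⌊c 0⌋ ⌊c 1⌋, gp (⌊c 0⌋ + 1) ⌊c 1⌋, gp (⌊c 0⌋ - 1) ⌊c 1⌋,
        gp ⌊c 0⌋ (⌊c 1⌋ + 1), gp ⌊c 0⌋ (⌊c 1⌋ - 1)}, ?_, finite_five _ _ _ _ _,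
        ncard_le_five _ _ _ _ _⟩
      intro p hp
      obtain ⟨m, n, rfl, h⟩ := (mem_iff_gp c p).mp hp
      obtain ⟨hc0, hc1⟩ := hc
      rcases key (c 0) (c 1) m n h with hm | hm | ⟨hm, -, -, hn⟩ <;>
        [skip; skip;
          (subst hm hn;
           simp only [Set.mem_insert_iff, Set.mem_singleton_iff]; tauto)] <;>
      rcases key (c 1) (c 0) n m (by linarith) with hn | hn | ⟨hn, -, -, hm'⟩ <;>
        subst hm <;> subst hn <;>
        simp only [Set.mem_insert_iff, Set.mem_singleton_iff] <;>
      first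
        | tauto
        | (exfalso; push_cast at h; rw [← hc0, ← hc1] at h; nlinarith)
    · refine ⟨{gp ⌊c 0⌋ ⌊c 1⌋, gp (⌊c 0⌋ + 1) ⌊c 1⌋, gp ⌊c 0⌋ (⌊c 1⌋ + 1),
        gp (⌊c 0⌋ + 1) (⌊c 1⌋ + 1), gp ⌊c 0⌋ ⌊c 1⌋}, ?_, finite_five _ _ _ _ _,
        ncard_le_five _ _ _ _ _⟩
      intro p hp
      obtain ⟨m, n, rfl, h⟩ := (mem_iff_gp c p).mp hp
      rcases key (c 0) (c 1) m n h with hm | hm | ⟨-, hcx, hcy, -⟩ <;>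
        [skip; skip; exact absurd ⟨hcx, hcy⟩ hc] <;>
      rcases key (c 1) (c 0) n m (by linarith) with hn | hn | ⟨-, hcy, hcx, -⟩ <;>
        [skip; skip; exact absurd ⟨hcx, hcy⟩ hc; skip; skip;
          exact absurd ⟨hcx, hcy⟩ hc] <;>
      subst hm <;> subst hn <;>
        simp only [Set.mem_insert_iff, Set.mem_singleton_iff] <;> tauto
  have hfin : (Metric.closedBall c 1 ∩ intGrid).Finite := hTfin.subset hsub
  have hne : (Metric.closedBall c 1 ∩ intGrid).Nonempty := by
    refine ⟨gp (round (c 0)) (round (c 1)), (mem_iff_gp c _).mpr ⟨_, _, rfl, ?_⟩⟩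
    have h1 := abs_sub_round (c 0)
    have h2 := abs_sub_round (c 1)
    nlinarith [sq_abs (c 0 - (round (c 0) : ℝ)), sq_abs (c 1 - (round (c 1) : ℝ)),
      abs_nonneg (c 0 - (round (c 0) : ℝ)), abs_nonneg (c 1 - (round (c 1) : ℝ))]
  exact ⟨hfin, (Set.ncard_pos hfin).mpr hne,
    le_trans (Set.ncard_le_ncard hsub hTfin) hT5⟩
end

section
/- Let α > 0, let s > 0, let c ∈ ℝ² be a fixed point, and let ρ be chosen uniformly at random from the interval [α, 2α]. Then the probability that the circle of radius ρ centered at the origin intersects the closed disk of radius s centered at c is at most 2s/α. -/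
open MeasureTheory

/-- For `ρ` uniform in `[α, 2α]`, the probability that the circle of radius `ρ`
centered at the origin intersects the closed disk of radius `s` centered at `c`
is at most `2s/α`. -/
theorem random_radius_circle_hits_disk (α s : ℝ) (hα : 0 < α) (hs : 0 < s)
    (c : Plane) :
    volume {ρ : ℝ | ρ ∈ Set.Icc α (2 * α) ∧
        (Metric.sphere (0 : Plane) ρ ∩ Metric.closedBall c s).Nonempty} /
      volume (Set.Icc α (2 * α)) ≤ ENNReal.ofReal (2 * s / α) := by
  have hsub : {ρ : ℝ | ρ ∈ Set.Icc α (2 * α) ∧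
      (Metric.sphere (0 : Plane) ρ ∩ Metric.closedBall c s).Nonempty} ⊆
      Set.Icc (‖c‖ - s) (‖c‖ + s) := by
    rintro ρ ⟨-, x, hx1, hx2⟩
    simp only [Metric.mem_sphere, Metric.mem_closedBall, dist_zero_right] at hx1 hx2
    rw [dist_eq_norm] at hx2
    constructor
    · have := norm_sub_norm_le c x
      rw [norm_sub_rev x c] at hx2
      linarith [hx1 ▸ this, hx2]
    · have := norm_le_norm_add_norm_sub' x c
      linarith [hx1 ▸ this]
  have h1 : volume {ρ : ℝ | ρ ∈ Set.Icc α (2 * α) ∧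
      (Metric.sphere (0 : Plane) ρ ∩ Metric.closedBall c s).Nonempty} ≤
      ENNReal.ofReal (2 * s) := by
    calc _ ≤ volume (Set.Icc (‖c‖ - s) (‖c‖ + s)) := measure_mono hsub
    _ = ENNReal.ofReal (2 * s) := by rw [Real.volume_Icc]; ring_nf
  have h2 : volume (Set.Icc α (2 * α)) = ENNReal.ofReal α := by
    rw [Real.volume_Icc]; ring_nf
  rw [h2, ENNReal.ofReal_div_of_pos hα]
  exact ENNReal.div_le_div_right h1 _
end

section
/- There is a universal constant C > 0 such that the following holds. Let p be a point in the plane, let α > 0, let r be chosen uniformly at random from the interval [α, 2α], and let A be a finite family of closed disks in the plane with pairwise disjoint interiors. Then the expected number of disks of A that intersect the circle of radius r centered at p is at most C·√|A|. -/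
open MeasureTheory

open Metric in
/-- Packing lemma: disjoint balls inside a big ball have total squared radius
at most the squared big radius. -/
lemma sum_sq_le_of_disjoint {ι : Type*} (B : Finset ι) (c : ι → Plane) (ρ : ι → ℝ)
    (p : Plane) (R : ℝ) (hR : 0 ≤ R)
    (hpos : ∀ d ∈ B, 0 ≤ ρ d)
    (hsub : ∀ d ∈ B, ball (c d) (ρ d) ⊆ ball p R)
    (hdisj : (B : Set ι).PairwiseDisjoint fun d => ball (c d) (ρ d)) :
    ∑ d ∈ B, (ρ d) ^ 2 ≤ R ^ 2 := by
  have hv0 : volume (ball (0:Plane) 1) ≠ 0 := (measure_ball_pos _ _ one_pos).ne'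
  have hvt : volume (ball (0:Plane) 1) ≠ ⊤ := measure_ball_lt_top.ne
  have hfr : Module.finrank ℝ Plane = 2 := finrank_euclideanSpace_fin
  have hball : ∀ (x : Plane) (r : ℝ), 0 ≤ r →
      volume (ball x r) = ENNReal.ofReal (r ^ 2) * volume (ball (0:Plane) 1) := by
    intro x r hr
    rw [Measure.addHaar_ball volume x hr, hfr]
  have key : ∑ d ∈ B, volume (ball (c d) (ρ d)) ≤ volume (ball p R) := by
    rw [← measure_biUnion_finset hdisj (fun d _ => measurableSet_ball)]
    exact measure_mono (Set.iUnion₂_subset hsub)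
  rw [hball p R hR] at key
  have key2 : ∑ d ∈ B, ENNReal.ofReal ((ρ d) ^ 2) * volume (ball (0:Plane) 1)
      ≤ ENNReal.ofReal (R ^ 2) * volume (ball (0:Plane) 1) := by
    refine le_trans (le_of_eq ?_) key
    exact Finset.sum_congr rfl fun d hd => (hball _ _ (hpos d hd)).symm
  rw [← Finset.sum_mul, ENNReal.mul_le_mul_iff_left hv0 hvt,
    ← ENNReal.ofReal_sum_of_nonneg (fun d _ => sq_nonneg _),
    ENNReal.ofReal_le_ofReal_iff (by positivity)] at key2
  exact key2

set_option maxHeartbeats 1000000 in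
/-- There is a universal constant `C > 0` such that for any point `p`, any `α > 0`,
and any finite family `A` of closed disks (center–radius pairs) with pairwise
disjoint interiors, the expected number of disks of `A` intersected by the circle
of radius `r` centered at `p`, for `r` uniform in `[α, 2α]`, is at most `C·√|A|`;
equivalently, the integral over `r ∈ [α, 2α]` of the number of intersected disks
is at most `C·√|A|·α`. -/
theorem expected_disks_hit_by_random_circle :
    ∃ C : ℝ, 0 < C ∧ ∀ (p : Plane) (α : ℝ), 0 < α →
      ∀ A : Finset (Plane × ℝ), (∀ d ∈ A, 0 < d.2) →
      ((A : Set (Plane × ℝ)).Pairwise fun d d' =>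
        Disjoint (Metric.ball d.1 d.2) (Metric.ball d'.1 d'.2)) →
      (∫⁻ r in Set.Icc α (2 * α),
          (({d : Plane × ℝ | d ∈ A ∧
            (Metric.sphere p r ∩ Metric.closedBall d.1 d.2).Nonempty}).ncard
            : ENNReal))
        ≤ ENNReal.ofReal (C * Real.sqrt A.card * α) := by
  classical
  refine ⟨24, by norm_num, ?_⟩
  intro p α hα A hApos hAdisj
  set n : ℕ := A.card with hn
  set D : Plane × ℝ → ℝ := fun d => dist p d.1 with hDdef
  -- Step 1: pointwise bound by sum of interval indicators
  have step1 : ∀ r : ℝ,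
      (({d : Plane × ℝ | d ∈ A ∧
          (Metric.sphere p r ∩ Metric.closedBall d.1 d.2).Nonempty}).ncard : ENNReal)
      ≤ ∑ d ∈ A, (Set.Icc (D d - d.2) (D d + d.2)).indicator (1 : ℝ → ENNReal) r := by
    intro r
    have hset : {d : Plane × ℝ | d ∈ A ∧
        (Metric.sphere p r ∩ Metric.closedBall d.1 d.2).Nonempty}
        = ↑(A.filter fun d => (Metric.sphere p r ∩ Metric.closedBall d.1 d.2).Nonempty) := by
      ext d; simp [Finset.mem_filter]
    rw [hset, Set.ncard_coe_finset, Finset.card_filter]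
    push_cast
    refine Finset.sum_le_sum fun d hd => ?_
    by_cases hhit : (Metric.sphere p r ∩ Metric.closedBall d.1 d.2).Nonempty
    · have hne := hhit
      obtain ⟨x, hx1, hx2⟩ := hne
      have hr : dist x p = r := Metric.mem_sphere.mp hx1
      have hxd : dist x d.1 ≤ d.2 := Metric.mem_closedBall.mp hx2
      have habs : |dist x p - dist d.1 p| ≤ dist x d.1 := abs_dist_sub_le x d.1 p
      have hmem : r ∈ Set.Icc (D d - d.2) (D d + d.2) := by
        have hDd : D d = dist d.1 p := dist_comm p d.1
        rw [hr] at habs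
        have h2 := abs_le.mp (habs.trans hxd)
        constructor
        · rw [hDd]; linarith [h2.1]
        · rw [hDd]; linarith [h2.2]
      simp only [Set.indicator_of_mem hmem, Pi.one_apply]
      split_ifs <;> simp
    · simp [hhit]
  -- Step 2: the integral is at most the sum of interval measures
  have step2 : (∫⁻ r in Set.Icc α (2 * α),
      (({d : Plane × ℝ | d ∈ A ∧
        (Metric.sphere p r ∩ Metric.closedBall d.1 d.2).Nonempty}).ncard : ENNReal))
      ≤ ∑ d ∈ A, volume (Set.Icc (D d - d.2) (D d + d.2) ∩ Set.Icc α (2 * α)) := by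
    calc _ ≤ ∫⁻ r in Set.Icc α (2 * α),
        ∑ d ∈ A, (Set.Icc (D d - d.2) (D d + d.2)).indicator (1 : ℝ → ENNReal) r :=
          lintegral_mono fun r => step1 r
      _ = ∑ d ∈ A, ∫⁻ r in Set.Icc α (2 * α),
          (Set.Icc (D d - d.2) (D d + d.2)).indicator (1 : ℝ → ENNReal) r :=
          lintegral_finset_sum _ fun d _ => measurable_const.indicator measurableSet_Icc
      _ = _ := by
          refine Finset.sum_congr rfl fun d _ => ?_
          rw [lintegral_indicator_one measurableSet_Icc,
            Measure.restrict_apply measurableSet_Icc]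
  -- Per-disk real bound
  set b : Plane × ℝ → ℝ := fun d => if 2 * α + d.2 < D d then 0
    else if α ≤ d.2 then α else 2 * d.2 with hbdef
  have hb_nonneg : ∀ d ∈ A, 0 ≤ b d := by
    intro d hd
    have := hApos d hd
    simp only [hbdef]
    split_ifs <;> linarith
  have step3 : ∀ d ∈ A,
      volume (Set.Icc (D d - d.2) (D d + d.2) ∩ Set.Icc α (2 * α))
        ≤ ENNReal.ofReal (b d) := by
    intro d hd
    by_cases hfar : 2 * α + d.2 < D d
    · have hempty : Set.Icc (D d - d.2) (D d + d.2) ∩ Set.Icc α (2 * α) = ∅ := by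
        rw [Set.eq_empty_iff_forall_notMem]
        rintro r ⟨⟨h1, _⟩, _, h4⟩
        linarith
      simp [hbdef, hempty, hfar]
    · by_cases hbig : α ≤ d.2
      · calc volume (Set.Icc (D d - d.2) (D d + d.2) ∩ Set.Icc α (2 * α))
            ≤ volume (Set.Icc α (2 * α)) := measure_mono Set.inter_subset_right
          _ = ENNReal.ofReal (2 * α - α) := Real.volume_Icc
          _ ≤ ENNReal.ofReal (b d) := by
              simp only [hbdef, if_neg hfar, if_pos hbig]
              exact ENNReal.ofReal_le_ofReal (by linarith)
      · calc volume (Set.Icc (D d - d.2) (D d + d.2) ∩ Set.Icc α (2 * α))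
            ≤ volume (Set.Icc (D d - d.2) (D d + d.2)) :=
              measure_mono Set.inter_subset_left
          _ = ENNReal.ofReal ((D d + d.2) - (D d - d.2)) := Real.volume_Icc
          _ ≤ ENNReal.ofReal (b d) := by
              simp only [hbdef, if_neg hfar, if_neg hbig]
              exact ENNReal.ofReal_le_ofReal (by linarith)
  -- the subfamilies
  set T : Finset (Plane × ℝ) := A.filter (fun d => ¬ 2 * α + d.2 < D d) with hTdef
  set Tb : Finset (Plane × ℝ) := T.filter (fun d => α ≤ d.2) with hTbdef
  set Ts : Finset (Plane × ℝ) := T.filter (fun d => ¬ α ≤ d.2) with hTsdef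
  have hTsub : T ⊆ A := Finset.filter_subset _ _
  have hTbsub : Tb ⊆ A := (Finset.filter_subset _ _).trans hTsub
  have hTssub : Ts ⊆ A := (Finset.filter_subset _ _).trans hTsub
  have hsumb : ∑ d ∈ A, b d = (Tb.card : ℝ) * α + ∑ d ∈ Ts, 2 * d.2 := by
    rw [← Finset.sum_filter_add_sum_filter_not A (fun d => 2 * α + d.2 < D d) b]
    have h1 : ∑ d ∈ A.filter (fun d => 2 * α + d.2 < D d), b d = 0 :=
      Finset.sum_eq_zero fun d hd => by
        simp [hbdef, (Finset.mem_filter.mp hd).2]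
    rw [h1, zero_add, ← hTdef,
      ← Finset.sum_filter_add_sum_filter_not T (fun d => α ≤ d.2) b, ← hTbdef, ← hTsdef]
    congr 1
    · rw [Finset.sum_congr rfl (fun d hd => ?_), Finset.sum_const, nsmul_eq_mul]
      have hd' := Finset.mem_filter.mp hd
      have hd'' := Finset.mem_filter.mp hd'.1
      simp [hbdef, hd''.2, hd'.2]
    · refine Finset.sum_congr rfl fun d hd => ?_
      have hd' := Finset.mem_filter.mp hd
      have hd'' := Finset.mem_filter.mp hd'.1
      simp [hbdef, hd''.2, hd'.2]
  -- big disks: at most 16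
  have hbig_card : (Tb.card : ℝ) ≤ 16 := by
    set y : Plane × ℝ → Plane := fun d =>
      if dist p d.1 ≤ 3 * α then d.1
      else p + (3 * α / dist p d.1) • (d.1 - p) with hydef
    have hyball : ∀ d ∈ Tb, Metric.ball (y d) α ⊆ Metric.ball d.1 d.2 ∧
        Metric.ball (y d) α ⊆ Metric.ball p (4 * α) := by
      intro d hd
      have hd' := Finset.mem_filter.mp hd
      have hbig : α ≤ d.2 := hd'.2
      have hnear : D d ≤ 2 * α + d.2 := not_lt.mp (Finset.mem_filter.mp hd'.1).2
      by_cases hcase : dist p d.1 ≤ 3 * α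
      · have hy : y d = d.1 := by simp [hydef, hcase]
        constructor
        · rw [hy]; exact Metric.ball_subset_ball hbig
        · rw [hy]
          refine Metric.ball_subset_ball' ?_
          have : dist d.1 p = dist p d.1 := dist_comm _ _
          linarith [hcase, this.le, this.ge]
      · have hy : y d = p + (3 * α / dist p d.1) • (d.1 - p) := by simp [hydef, hcase]
        have hD3 : 3 * α < dist p d.1 := not_le.mp hcase
        have hD0 : 0 < dist p d.1 := by linarith
        set t : ℝ := 3 * α / dist p d.1 with htdef
        have ht0 : 0 < t := by positivity
        have ht1 : t ≤ 1 := by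
          rw [htdef, div_le_one hD0]; linarith
        have hnorm : ‖d.1 - p‖ = dist p d.1 := by
          rw [← dist_eq_norm, dist_comm]
        have hdyp : dist (y d) p = 3 * α := by
          rw [hy, dist_eq_norm]
          have : p + t • (d.1 - p) - p = t • (d.1 - p) := by abel
          rw [this, norm_smul, hnorm, Real.norm_eq_abs, abs_of_pos ht0,
            htdef, div_mul_cancel₀ _ hD0.ne']
        have hdyc : dist (y d) d.1 = dist p d.1 - 3 * α := by
          rw [hy, dist_eq_norm]
          have heq : p + t • (d.1 - p) - d.1 = (t - 1) • (d.1 - p) := by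
            rw [sub_smul, one_smul]; abel
          rw [heq, norm_smul, hnorm, Real.norm_eq_abs, abs_of_nonpos (by linarith),
            neg_sub, sub_mul, one_mul, htdef, div_mul_cancel₀ _ hD0.ne']
        constructor
        · refine Metric.ball_subset_ball' ?_
          rw [hdyc]; linarith
        · refine Metric.ball_subset_ball' ?_
          rw [hdyp]; linarith
    have hkey : ∑ _d ∈ Tb, α ^ 2 ≤ (4 * α) ^ 2 := by
      refine sum_sq_le_of_disjoint Tb y (fun _ => α) p (4 * α) (by linarith)
        (fun d _ => hα.le) (fun d hd => (hyball d hd).2) ?_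
      intro d hd d' hd' hne
      have hdisj := hAdisj (hTbsub hd) (hTbsub hd') hne
      exact hdisj.mono (hyball d hd).1 (hyball d' hd').1
    rw [Finset.sum_const, nsmul_eq_mul] at hkey
    have hα2 : (0:ℝ) < α ^ 2 := by positivity
    nlinarith
  -- small disks
  have hsmall_sq : ∑ d ∈ Ts, d.2 ^ 2 ≤ (4 * α) ^ 2 := by
    refine sum_sq_le_of_disjoint Ts Prod.fst Prod.snd p (4 * α) (by linarith)
      (fun d hd => (hApos d (hTssub hd)).le) ?_ ?_
    · intro d hd
      have hd' := Finset.mem_filter.mp hd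
      have hsm : d.2 < α := not_le.mp hd'.2
      have hnear : D d ≤ 2 * α + d.2 := not_lt.mp (Finset.mem_filter.mp hd'.1).2
      refine Metric.ball_subset_ball' ?_
      have : dist d.1 p = dist p d.1 := dist_comm _ _
      simp only [hDdef] at hnear
      linarith [this.le, this.ge]
    · intro d hd d' hd' hne
      exact hAdisj (hTssub hd) (hTssub hd') hne
  have hsmall_sum : ∑ d ∈ Ts, 2 * d.2 ≤ 8 * α * Real.sqrt n := by
    have hcs : (∑ d ∈ Ts, (1:ℝ) * d.2) ^ 2 ≤
        (∑ d ∈ Ts, (1:ℝ) ^ 2) * ∑ d ∈ Ts, d.2 ^ 2 :=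
      Finset.sum_mul_sq_le_sq_mul_sq Ts (fun _ => 1) Prod.snd
    simp only [one_mul, one_pow, Finset.sum_const, nsmul_eq_mul, mul_one] at hcs
    have hcard : (Ts.card : ℝ) ≤ n := by
      exact_mod_cast Finset.card_le_card hTssub
    have hsq : (∑ d ∈ Ts, d.2) ^ 2 ≤ (n : ℝ) * (16 * α ^ 2) := by
      calc (∑ d ∈ Ts, d.2) ^ 2 ≤ (Ts.card : ℝ) * ∑ d ∈ Ts, d.2 ^ 2 := hcs
        _ ≤ (n : ℝ) * (16 * α ^ 2) := by
            have h1 : (0:ℝ) ≤ ∑ d ∈ Ts, d.2 ^ 2 :=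
              Finset.sum_nonneg fun d _ => sq_nonneg _
            have h2 : ∑ d ∈ Ts, d.2 ^ 2 ≤ 16 * α ^ 2 := by nlinarith [hsmall_sq]
            have h3 : (0:ℝ) ≤ (Ts.card : ℝ) := Nat.cast_nonneg _
            nlinarith
    have hsum_nonneg : (0:ℝ) ≤ ∑ d ∈ Ts, d.2 :=
      Finset.sum_nonneg fun d hd => (hApos d (hTssub hd)).le
    have : ∑ d ∈ Ts, d.2 ≤ 4 * α * Real.sqrt n := by
      have h4 : (0:ℝ) ≤ 4 * α * Real.sqrt n := by positivity
      nlinarith [Real.sq_sqrt (Nat.cast_nonneg n : (0:ℝ) ≤ n), hsq,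
        Real.sqrt_nonneg (n:ℝ)]
    calc ∑ d ∈ Ts, 2 * d.2 = 2 * ∑ d ∈ Ts, d.2 := by rw [Finset.mul_sum]
      _ ≤ 8 * α * Real.sqrt n := by linarith
  -- final real bound
  have hfinal : ∑ d ∈ A, b d ≤ 24 * Real.sqrt n * α := by
    rcases Finset.eq_empty_or_nonempty A with hAe | hAne
    · have he1 : Tb = ∅ := Finset.subset_empty.mp (hAe ▸ hTbsub)
      have he2 : Ts = ∅ := Finset.subset_empty.mp (hAe ▸ hTssub)
      rw [hsumb, he1, he2]
      simp only [Finset.card_empty, Nat.cast_zero, zero_mul, Finset.sum_empty, add_zero]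
      positivity
    · have hn1 : 1 ≤ Real.sqrt n := by
        rw [Real.one_le_sqrt]
        exact_mod_cast Finset.card_pos.mpr hAne
      rw [hsumb]
      have : (Tb.card : ℝ) * α ≤ 16 * Real.sqrt n * α := by
        nlinarith
      nlinarith [hsmall_sum]
  -- put everything together
  calc (∫⁻ r in Set.Icc α (2 * α),
      (({d : Plane × ℝ | d ∈ A ∧
        (Metric.sphere p r ∩ Metric.closedBall d.1 d.2).Nonempty}).ncard : ENNReal))
      ≤ ∑ d ∈ A, volume (Set.Icc (D d - d.2) (D d + d.2) ∩ Set.Icc α (2 * α)) := step2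
    _ ≤ ∑ d ∈ A, ENNReal.ofReal (b d) := Finset.sum_le_sum step3
    _ = ENNReal.ofReal (∑ d ∈ A, b d) := (ENNReal.ofReal_sum_of_nonneg hb_nonneg).symm
    _ ≤ ENNReal.ofReal (24 * Real.sqrt A.card * α) := ENNReal.ofReal_le_ofReal (by
        rw [← hn]; exact hfinal)
end
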